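/- arXiv:2107.12596 — 5 statements merged into one kernel-verified Lean document; each statement's English description precedes it below -/
import Mathlib

section
/- Under the communication setup and the backward controller recursion with horizon M, suppose the multi-input system state evolves as x_{k+1} = A_k x_k + Σ_{i=1}^N B_{k,i} u_{k,i} and each agent's virtual state evolves as x_{k+1,i} = Σ_{j∈𝒩̄_i} ω_ji P̄_{k+1,i}^{-1} P_{k+1,j} A_k x_{k,j} + B_{k,i} u_{k,i}, where the inputs u_{k,i} ∈ ℝ^{m_i} are arbitrary and shared between the two systems, and the virtual states are initialized as x_{0,i} = x_0/N for every i. Then x_k = Σ_{i=1}^N x_{k,i} for all k = 0, 1, …, M. -/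
/-!
For each sender `j`, the fused gain satisfies `∑_{i ∈ 𝒩_j} ω_ji P̄_{k+1,i}⁻¹ P_{k+1,j} = I`,
since `P_{k+1,j}` is by construction the inverse of `∑_{i ∈ 𝒩_j} ω_ji P̄_{k+1,i}⁻¹`. Summing the
virtual dynamics over all agents and exchanging the double sum therefore gives
`∑ᵢ x_{k+1,i} = A_k ∑ⱼ x_{k,j} + ∑ᵢ B_{k,i} u_{k,i}`, the true dynamics, and induction from
`∑ᵢ x₀/N = x₀` concludes. The inverses are genuine (`⁻¹` returns `0` on singular matrices)
because a backward induction shows that every `P̆`, `P̄` and `P` in the recursion is positive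
definite.
-/

open Matrix Finset

namespace Matrix

variable {ι κ σ : Type*} [Fintype ι] [Fintype κ]

theorem PosSemidef.transpose_mul_mul_add_smul {P Q : Matrix ι ι ℝ} (hP : P.PosSemidef)
    (hQ : Q.PosDef) (A : Matrix ι ι ℝ) {c : ℝ} (hc : 0 < c) : (Aᵀ * P * A + c • Q).PosDef :=
  PosDef.posSemidef_add (hP.conjTranspose_mul_mul_same A) (hQ.smul hc)

variable [DecidableEq ι] [DecidableEq κ]

theorem PosDef.inv_add_mul_inv_mul_transpose_inv {P : Matrix ι ι ℝ} {R : Matrix κ κ ℝ}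
    (hP : P.PosDef) (hR : R.PosDef) (B : Matrix ι κ ℝ) : (P⁻¹ + B * R⁻¹ * Bᵀ)⁻¹.PosDef :=
  (hP.inv.add_posSemidef (hR.inv.posSemidef.mul_mul_conjTranspose_same B)).inv

theorem posDef_sum_smul_inv {s : Finset σ} (hs : s.Nonempty) {w : σ → ℝ}
    (hw : ∀ j ∈ s, 0 < w j) {P : σ → Matrix ι ι ℝ} (hP : ∀ j ∈ s, (P j).PosDef) :
    (∑ j ∈ s, w j • (P j)⁻¹).PosDef :=
  posDef_sum hs fun j hj => (hP j hj).inv.smul (hw j hj)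

theorem sum_mulVec_inv_sum_mulVec {α : Type*} [CommRing α] (s : Finset σ)
    (C : σ → Matrix ι ι α) (h : IsUnit (∑ j ∈ s, C j)) (v : ι → α) :
    ∑ j ∈ s, C j *ᵥ ((∑ j ∈ s, C j)⁻¹ *ᵥ v) = v := by
  rw [← sum_mulVec, mulVec_mulVec, mul_nonsing_inv _ ((isUnit_iff_isUnit_det _).mp h),
    one_mulVec]

end Matrix

theorem stmt5 {n N : ℕ} (hN : 0 < N) (m : Fin N → ℕ)
    (nbr : Fin N → Finset (Fin N)) (hself : ∀ i, i ∈ nbr i)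
    (ω : Fin N → Fin N → ℝ)
    (hω : ∀ i, ∀ j ∈ nbr i, 0 < ω i j ∧
      ω i j ≤ 1 / ((Finset.univ.filter (fun l => j ∈ nbr l)).card : ℝ))
    (M : ℕ)
    (A : ℕ → Matrix (Fin n) (Fin n) ℝ)
    (B : ∀ _ : ℕ, ∀ i : Fin N, Matrix (Fin n) (Fin (m i)) ℝ)
    (Q : ℕ → Matrix (Fin n) (Fin n) ℝ) (hQ : ∀ k, (Q k).PosDef)
    (R : ∀ _ : ℕ, ∀ i : Fin N, Matrix (Fin (m i)) (Fin (m i)) ℝ)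
    (hR : ∀ k i, (R k i).PosDef)
    (Pbar Pm Pbrv : ℕ → Fin N → Matrix (Fin n) (Fin n) ℝ)
    (hPbrvM : ∀ i, Pbrv M i = (N : ℝ) • Q M)
    (hPbar : ∀ k < M, ∀ i,
      Pbar (k+1) i = ((Pbrv (k+1) i)⁻¹ + B k i * (R k i)⁻¹ * (B k i)ᵀ)⁻¹)
    (hPm : ∀ k < M, ∀ i, Pm (k+1) i = (∑ j ∈ nbr i, ω i j • (Pbar (k+1) j)⁻¹)⁻¹)
    (hPbrv : ∀ k < M, ∀ i, Pbrv k i = (A k)ᵀ * Pm (k+1) i * A k + (N : ℝ) • Q k)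
    (x : ℕ → Fin n → ℝ) (xv : ℕ → Fin N → Fin n → ℝ)
    (u : ∀ _ : ℕ, ∀ i : Fin N, Fin (m i) → ℝ)
    (hx : ∀ k < M, x (k+1) = A k *ᵥ x k + ∑ i, B k i *ᵥ u k i)
    (hxv0 : ∀ i, xv 0 i = (N : ℝ)⁻¹ • x 0)
    (hxv : ∀ k < M, ∀ i, xv (k+1) i =
      (∑ j ∈ Finset.univ.filter (fun j => i ∈ nbr j),
        ω j i • ((Pbar (k+1) i)⁻¹ *ᵥ (Pm (k+1) j *ᵥ (A k *ᵥ xv k j))))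
      + B k i *ᵥ u k i) :
    ∀ k ≤ M, x k = ∑ i, xv k i := by
  have hNpos : (0 : ℝ) < N := Nat.cast_pos.mpr hN
  have hFusedPD : ∀ k < M, (∀ i, (Pbrv (k+1) i).PosDef) →
      ∀ i, (∑ j ∈ nbr i, ω i j • (Pbar (k+1) j)⁻¹).PosDef := fun k hk hPbrvPD i =>
    posDef_sum_smul_inv ⟨i, hself i⟩ (fun j hj => (hω i j hj).1) fun j _ =>
      hPbar k hk j ▸ (hPbrvPD j).inv_add_mul_inv_mul_transpose_inv (hR k j) (B k j)
  have hPbrvPD : ∀ k ≤ M, ∀ i, (Pbrv k i).PosDef := by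
    intro k hk
    induction hk using Nat.decreasingInduction with
    | self => exact fun i => hPbrvM i ▸ (hQ M).smul hNpos
    | of_succ k hk ih =>
      exact fun i => hPbrv k hk i ▸ hPm k hk i ▸
        (hFusedPD k hk ih i).inv.posSemidef.transpose_mul_mul_add_smul (hQ k) (A k) hNpos
  have hGainSum : ∀ k < M, ∀ j v,
      ∑ i ∈ nbr j, ω j i • ((Pbar (k+1) i)⁻¹ *ᵥ (Pm (k+1) j *ᵥ v)) = v := by
    intro k hk j v
    simp_rw [← smul_mulVec, hPm k hk j]
    exact sum_mulVec_inv_sum_mulVec _ _ (hFusedPD k hk (hPbrvPD _ hk) j).isUnit v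
  intro k hk
  induction k with
  | zero =>
    simp only [hxv0, sum_const, card_univ, Fintype.card_fin, ← Nat.cast_smul_eq_nsmul ℝ,
      smul_smul, mul_inv_cancel₀ hNpos.ne', one_smul]
  | succ k ih =>
    simp only [hx k hk, hxv k hk, sum_add_distrib]
    rw [ih (Nat.le_of_succ_le hk), mulVec_sum, sum_comm' (t' := univ) (s' := nbr) (by simp)]
    simp only [hGainSum k hk]
end

section
/- Under the communication setup, the backward controller recursion with horizon M, and the distributed controller with virtual dynamics, for every time step k ∈ {0,…,M−1} and every agent i the following one-step inequality holds: x_{k+1,i}^T P̆_{k+1,i} x_{k+1,i} + u_{k,i}^T R_{k,i} u_{k,i} ≤ Σ_{j∈𝒩̄_i} ω_ji · x_{k,j}^T A_k^T P_{k+1,j} P̄_{k+1,i}^{-1} P_{k+1,j} A_k x_{k,j}. -/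
/-!
Write agent `i`'s step as `x⁺ = z + B u`, `u = -K z`, with `z = Σ_j ω_ji P̄⁻¹ P_j A x_j` and
`K = (R + Bᵀ P̆ B)⁻¹ Bᵀ P̆` the one-step LQR gain. Completing the square, together with the Woodbury
identity, turns the one-step cost `x⁺ᵀ P̆ x⁺ + uᵀ R u` into `zᵀ P̄ z` with
`P̄ = (P̆⁻¹ + B R⁻¹ Bᵀ)⁻¹`. Each weight `ω_ji` is at most `1 / |𝒩̄_i|`, so the weights have sum at
most one, and convexity of the quadratic form of `P̄ ≻ 0` bounds `zᵀ P̄ z` by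
`Σ_j ω_ji v_jᵀ P̄ v_j` with `v_j = P̄⁻¹ P_j A x_j`; these are the terms on the right. All the
inverses are taken of positive definite matrices, which follows by backward induction on `k`
from `Q, R ≻ 0`.
-/

open Matrix Finset

section Quadratic

variable {ι κ α : Type*} [Fintype ι] [Fintype κ]

theorem Matrix.mulVec_dotProduct_mulVec_mulVec [CommSemiring α] (C : Matrix ι κ α)
    (M : Matrix ι ι α) (x y : κ → α) :
    (C *ᵥ x) ⬝ᵥ (M *ᵥ (C *ᵥ y)) = x ⬝ᵥ ((Cᵀ * M * C) *ᵥ y) := by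
  rw [dotProduct_comm, dotProduct_mulVec, ← mulVec_transpose, dotProduct_comm, mulVec_mulVec,
    mulVec_mulVec, Matrix.mul_assoc]

variable [DecidableEq ι] [CommRing α] {P : Matrix ι ι α} {R : Matrix κ κ α} {B : Matrix ι κ α}

theorem Matrix.transpose_one_sub_mul_mul_add_eq {K : Matrix κ ι α}
    (hK : (R + Bᵀ * P * B) * K = Bᵀ * P) :
    (1 - B * K)ᵀ * P * (1 - B * K) + Kᵀ * R * K = P - P * B * K := by
  have hS : Kᵀ * (R + Bᵀ * P * B) * K = Kᵀ * Bᵀ * P := by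
    rw [Matrix.mul_assoc, hK, Matrix.mul_assoc]
  rw [transpose_sub, transpose_one, transpose_mul]
  simp only [Matrix.sub_mul, Matrix.mul_sub, Matrix.mul_add, Matrix.add_mul, Matrix.one_mul,
    Matrix.mul_one, Matrix.mul_assoc] at hS ⊢
  rw [← hS]
  abel

theorem Matrix.closedLoop_dotProduct_mulVec_eq {K : Matrix κ ι α}
    (hK : (R + Bᵀ * P * B) * K = Bᵀ * P) (z : ι → α) :
    (z + B *ᵥ (-K *ᵥ z)) ⬝ᵥ (P *ᵥ (z + B *ᵥ (-K *ᵥ z))) + (-K *ᵥ z) ⬝ᵥ (R *ᵥ (-K *ᵥ z))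
      = z ⬝ᵥ ((P - P * B * K) *ᵥ z) := by
  have hx : z + B *ᵥ (-K *ᵥ z) = (1 - B * K) *ᵥ z := by
    rw [neg_mulVec, mulVec_neg, mulVec_mulVec, sub_mulVec, one_mulVec, sub_eq_add_neg]
  rw [hx, ← transpose_one_sub_mul_mul_add_eq hK, add_mulVec, dotProduct_add,
    mulVec_dotProduct_mulVec_mulVec, mulVec_dotProduct_mulVec_mulVec]
  simp only [transpose_neg, Matrix.neg_mul, Matrix.mul_neg, neg_neg]

theorem Matrix.inv_add_mul_inv_mul_transpose_eq [DecidableEq κ] (hP : IsUnit P) (hR : IsUnit R)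
    (hS : IsUnit (R + Bᵀ * P * B)) :
    (P⁻¹ + B * R⁻¹ * Bᵀ)⁻¹ = P - P * B * ((R + Bᵀ * P * B)⁻¹ * (Bᵀ * P)) := by
  rw [add_mul_mul_inv_eq_sub _ _ _ _ (isUnit_nonsing_inv_iff.mpr hP)
    (isUnit_nonsing_inv_iff.mpr hR)]
  · simp only [nonsing_inv_nonsing_inv _ ((isUnit_iff_isUnit_det _).mp hP),
      nonsing_inv_nonsing_inv _ ((isUnit_iff_isUnit_det _).mp hR), Matrix.mul_assoc]
  · simpa only [nonsing_inv_nonsing_inv _ ((isUnit_iff_isUnit_det _).mp hP),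
      nonsing_inv_nonsing_inv _ ((isUnit_iff_isUnit_det _).mp hR)] using hS

theorem Matrix.inv_mulVec_dotProduct_mulVec_inv_mulVec {W : Matrix ι ι α} (hW : W.IsSymm)
    (hWu : IsUnit W) (hP : P.IsSymm) (A : Matrix ι κ α) (x : κ → α) :
    (W⁻¹ *ᵥ (P *ᵥ (A *ᵥ x))) ⬝ᵥ (W *ᵥ (W⁻¹ *ᵥ (P *ᵥ (A *ᵥ x))))
      = x ⬝ᵥ ((Aᵀ * P * W⁻¹ * P * A) *ᵥ x) := by
  rw [mulVec_mulVec, mulVec_mulVec, mulVec_dotProduct_mulVec_mulVec, transpose_mul, transpose_mul,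
    hP.eq, hW.inv.eq]
  simp only [Matrix.mul_assoc, nonsing_inv_mul_cancel_left _ _ ((isUnit_iff_isUnit_det _).mp hWu)]

end Quadratic

theorem LinearMap.BilinForm.apply_sum_smul_sum_smul_le {R E ι : Type*} [CommRing R]
    [LinearOrder R] [IsStrictOrderedRing R] [AddCommGroup E] [Module R E]
    (b : LinearMap.BilinForm R E) (hb : ∀ x, 0 ≤ b x x) {s : Finset ι} {w : ι → R}
    (hw0 : ∀ j ∈ s, 0 ≤ w j) (hw1 : ∑ j ∈ s, w j ≤ 1) (v : ι → E) :
    b (∑ j ∈ s, w j • v j) (∑ j ∈ s, w j • v j) ≤ ∑ j ∈ s, w j * b (v j) (v j) := by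
  set z := ∑ j ∈ s, w j • v j
  -- `Σ w_j b(v_j - z, v_j - z) ≥ 0` expands to `Σ w_j b(v_j, v_j) ≥ (2 - Σ w_j) b(z, z)`.
  have hvar : 0 ≤ ∑ j ∈ s, w j * b (v j - z) (v j - z) :=
    sum_nonneg fun j hj => mul_nonneg (hw0 j hj) (hb _)
  have hleft : b z z = ∑ j ∈ s, w j * b (v j) z := by
    change b (∑ j ∈ s, w j • v j) z = _
    simp only [map_sum, map_smul, LinearMap.sum_apply, LinearMap.smul_apply, smul_eq_mul]
  have hright : b z z = ∑ j ∈ s, w j * b z (v j) := by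
    change b z (∑ j ∈ s, w j • v j) = _
    simp only [map_sum, map_smul, smul_eq_mul]
  have hexpand : ∑ j ∈ s, w j * b (v j - z) (v j - z) = ∑ j ∈ s, w j * b (v j) (v j)
      - ∑ j ∈ s, w j * b (v j) z - ∑ j ∈ s, w j * b z (v j) + (∑ j ∈ s, w j) * b z z := by
    simp only [map_sub, LinearMap.sub_apply, mul_sub, sum_sub_distrib, sum_mul]
    abel
  nlinarith [hb z, mul_nonneg (sub_nonneg.2 hw1) (hb z)]

theorem Matrix.PosSemidef.sum_smul_dotProduct_mulVec_sum_smul_le {ι n : Type*} [Fintype n]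
    [DecidableEq n] {W : Matrix n n ℝ} (hW : W.PosSemidef) {s : Finset ι} {w : ι → ℝ}
    (hw0 : ∀ j ∈ s, 0 ≤ w j) (hw1 : ∑ j ∈ s, w j ≤ 1) (v : ι → n → ℝ) :
    (∑ j ∈ s, w j • v j) ⬝ᵥ (W *ᵥ ∑ j ∈ s, w j • v j) ≤ ∑ j ∈ s, w j * (v j ⬝ᵥ (W *ᵥ v j)) := by
  simpa only [toBilin'_apply'] using (toBilin' W).apply_sum_smul_sum_smul_le
    (fun x => by simpa [toBilin'_apply'] using hW.dotProduct_mulVec_nonneg x) hw0 hw1 v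

theorem Finset.sum_le_one_of_le_one_div_card {ι R : Type*} [Field R] [LinearOrder R]
    [IsStrictOrderedRing R] {s : Finset ι} {f : ι → R} (h : ∀ j ∈ s, f j ≤ 1 / s.card) :
    ∑ j ∈ s, f j ≤ 1 := by
  calc ∑ j ∈ s, f j ≤ s.card • (1 / s.card : R) := sum_le_card_nsmul s f _ h
    _ ≤ 1 := by rw [nsmul_eq_mul, one_div]; exact mul_inv_le_one

section PosDef

variable {ι κ n : Type*} [Fintype κ] [DecidableEq κ] [Fintype n] [DecidableEq n]

theorem Matrix.PosDef.inv_add_mul_inv_mul_transpose {P : Matrix n n ℝ} {R : Matrix κ κ ℝ}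
    (hP : P.PosDef) (hR : R.PosDef) (B : Matrix n κ ℝ) : ((P⁻¹ + B * R⁻¹ * Bᵀ)⁻¹).PosDef :=
  (hP.inv.add_posSemidef (by simpa using hR.inv.posSemidef.mul_mul_conjTranspose_same B)).inv

theorem Matrix.posDef_inv_sum_smul_inv {s : Finset ι} (hs : s.Nonempty) {c : ι → ℝ}
    (hc : ∀ j ∈ s, 0 < c j) {P : ι → Matrix n n ℝ} (hP : ∀ j ∈ s, (P j).PosDef) :
    ((∑ j ∈ s, c j • (P j)⁻¹)⁻¹).PosDef :=
  (posDef_sum hs fun j hj => (hP j hj).inv.smul (hc j hj)).inv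

theorem Matrix.PosDef.closedLoop_cost_eq {P : Matrix n n ℝ} {R : Matrix κ κ ℝ} (hP : P.PosDef)
    (hR : R.PosDef) (B : Matrix n κ ℝ) {K : Matrix κ n ℝ}
    (hK : K = (R + Bᵀ * P * B)⁻¹ * (Bᵀ * P)) (z : n → ℝ) :
    (z + B *ᵥ (-K *ᵥ z)) ⬝ᵥ (P *ᵥ (z + B *ᵥ (-K *ᵥ z))) + (-K *ᵥ z) ⬝ᵥ (R *ᵥ (-K *ᵥ z))
      = z ⬝ᵥ ((P⁻¹ + B * R⁻¹ * Bᵀ)⁻¹ *ᵥ z) := by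
  have hS : (R + Bᵀ * P * B).PosDef :=
    hR.add_posSemidef (by simpa using hP.posSemidef.conjTranspose_mul_mul_same B)
  rw [inv_add_mul_inv_mul_transpose_eq hP.isUnit hR.isUnit hS.isUnit, ← hK]
  refine closedLoop_dotProduct_mulVec_eq ?_ z
  rw [hK, mul_nonsing_inv_cancel_left _ _ ((isUnit_iff_isUnit_det _).mp hS.isUnit)]

theorem posDef_of_distributedRiccati {m : ι → Type*} [∀ i, Fintype (m i)]
    [∀ i, DecidableEq (m i)] {nbr : ι → Finset ι} (hself : ∀ i, i ∈ nbr i) {ω : ι → ι → ℝ}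
    (hω : ∀ i, ∀ j ∈ nbr i, 0 < ω i j) {c : ℝ} (hc : 0 < c) {M : ℕ} {A : ℕ → Matrix n n ℝ}
    {B : ∀ _ : ℕ, ∀ i, Matrix n (m i) ℝ} {Q : ℕ → Matrix n n ℝ} (hQ : ∀ k, (Q k).PosDef)
    {R : ∀ _ : ℕ, ∀ i, Matrix (m i) (m i) ℝ} (hR : ∀ k i, (R k i).PosDef)
    {Pbar Pm Pbrv : ℕ → ι → Matrix n n ℝ} (hPbrvM : ∀ i, Pbrv M i = c • Q M)
    (hPbar : ∀ k < M, ∀ i,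
      Pbar (k+1) i = ((Pbrv (k+1) i)⁻¹ + B k i * (R k i)⁻¹ * (B k i)ᵀ)⁻¹)
    (hPm : ∀ k < M, ∀ i, Pm (k+1) i = (∑ j ∈ nbr i, ω i j • (Pbar (k+1) j)⁻¹)⁻¹)
    (hPbrv : ∀ k < M, ∀ i, Pbrv k i = (A k)ᵀ * Pm (k+1) i * A k + c • Q k) :
    ∀ k ≤ M, ∀ i, (Pbrv k i).PosDef := by
  intro k hk
  induction hk using Nat.decreasingInduction with
  | self => exact fun i => hPbrvM i ▸ (hQ M).smul hc
  | of_succ k hk ih =>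
    have hPbarPD (j : ι) : (Pbar (k+1) j).PosDef :=
      hPbar k hk j ▸ (ih j).inv_add_mul_inv_mul_transpose (hR k j) _
    intro i
    have hPmPD : (Pm (k+1) i).PosDef :=
      hPm k hk i ▸ posDef_inv_sum_smul_inv ⟨i, hself i⟩ (hω i) fun j _ => hPbarPD j
    rw [hPbrv k hk i]
    exact ((hQ k).smul hc).posSemidef_add
      (by simpa using hPmPD.posSemidef.conjTranspose_mul_mul_same (A k))

end PosDef

theorem per_agent_one_step_inequality_general {n N : ℕ} (m : Fin N → ℕ)
    (nbr : Fin N → Finset (Fin N)) (hself : ∀ i, i ∈ nbr i)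
    (ω : Fin N → Fin N → ℝ)
    (hω : ∀ i, ∀ j ∈ nbr i, 0 < ω i j ∧
      ω i j ≤ 1 / ((Finset.univ.filter (fun l => j ∈ nbr l)).card : ℝ))
    (M : ℕ)
    (A : ℕ → Matrix (Fin n) (Fin n) ℝ)
    (B : ∀ _ : ℕ, ∀ i : Fin N, Matrix (Fin n) (Fin (m i)) ℝ)
    (Q : ℕ → Matrix (Fin n) (Fin n) ℝ) (hQ : ∀ k, (Q k).PosDef)
    (R : ∀ _ : ℕ, ∀ i : Fin N, Matrix (Fin (m i)) (Fin (m i)) ℝ)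
    (hR : ∀ k i, (R k i).PosDef)
    (Pbar Pm Pbrv : ℕ → Fin N → Matrix (Fin n) (Fin n) ℝ)
    (hPbrvM : ∀ i, Pbrv M i = (N : ℝ) • Q M)
    (hPbar : ∀ k < M, ∀ i,
      Pbar (k+1) i = ((Pbrv (k+1) i)⁻¹ + B k i * (R k i)⁻¹ * (B k i)ᵀ)⁻¹)
    (hPm : ∀ k < M, ∀ i, Pm (k+1) i = (∑ j ∈ nbr i, ω i j • (Pbar (k+1) j)⁻¹)⁻¹)
    (hPbrv : ∀ k < M, ∀ i, Pbrv k i = (A k)ᵀ * Pm (k+1) i * A k + (N : ℝ) • Q k)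
    (xv : ℕ → Fin N → Fin n → ℝ)
    (u : ∀ _ : ℕ, ∀ i : Fin N, Fin (m i) → ℝ)
    (hxv : ∀ k < M, ∀ i, xv (k+1) i =
      (∑ j ∈ Finset.univ.filter (fun j => i ∈ nbr j),
        ω j i • ((Pbar (k+1) i)⁻¹ *ᵥ (Pm (k+1) j *ᵥ (A k *ᵥ xv k j))))
      + B k i *ᵥ u k i)
    (hu : ∀ k < M, ∀ i, u k i =
      (-((R k i + (B k i)ᵀ * Pbrv (k+1) i * B k i)⁻¹ * ((B k i)ᵀ * Pbrv (k+1) i))) *ᵥ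
      (∑ j ∈ Finset.univ.filter (fun j => i ∈ nbr j),
        ω j i • ((Pbar (k+1) i)⁻¹ *ᵥ (Pm (k+1) j *ᵥ (A k *ᵥ xv k j)))))
    :
    ∀ k < M, ∀ i,
      xv (k+1) i ⬝ᵥ (Pbrv (k+1) i *ᵥ xv (k+1) i) + u k i ⬝ᵥ (R k i *ᵥ u k i)
      ≤ ∑ j ∈ Finset.univ.filter (fun j => i ∈ nbr j),
          ω j i * (xv k j ⬝ᵥ
            (((A k)ᵀ * Pm (k+1) j * (Pbar (k+1) i)⁻¹ * Pm (k+1) j * A k) *ᵥ xv k j)) := by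
  intro k hk i
  have hPbrvPD : ∀ j, (Pbrv (k+1) j).PosDef :=
    posDef_of_distributedRiccati hself (fun i j hj => (hω i j hj).1) (Nat.cast_pos.mpr i.pos)
      hQ hR hPbrvM hPbar hPm hPbrv (k+1) hk
  have hPbarPD (j : Fin N) : (Pbar (k+1) j).PosDef :=
    hPbar k hk j ▸ (hPbrvPD j).inv_add_mul_inv_mul_transpose (hR k j) _
  have hPmPD (j : Fin N) : (Pm (k+1) j).PosDef :=
    hPm k hk j ▸ posDef_inv_sum_smul_inv ⟨j, hself j⟩ (fun l hl => (hω j l hl).1)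
      fun l _ => hPbarPD l
  have hW := hPbarPD i
  have hweights : ∑ j ∈ univ.filter (fun j => i ∈ nbr j), ω j i ≤ 1 :=
    sum_le_one_of_le_one_div_card fun j hj => (hω j i (mem_filter.mp hj).2).2
  rw [hxv k hk i, hu k hk i, (hPbrvPD i).closedLoop_cost_eq (hR k i) _ rfl, ← hPbar k hk i]
  calc _ ≤ _ := hW.posSemidef.sum_smul_dotProduct_mulVec_sum_smul_le
          (fun j hj => (hω j i (mem_filter.mp hj).2).1.le) hweights _
    _ = _ := sum_congr rfl fun j _ => by
          rw [inv_mulVec_dotProduct_mulVec_inv_mulVec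
            (isHermitian_iff_isSymm.mp hW.isHermitian) hW.isUnit
            (isHermitian_iff_isSymm.mp (hPmPD j).isHermitian)]

/-- Per-agent one-step Lyapunov-type inequality from the proof of Theorem 2 of the
paper: under the communication setup, the backward controller recursion and the
distributed controller with virtual dynamics, for every `k < M` and every agent `i`,
`x_{k+1,i}ᵀ P̆_{k+1,i} x_{k+1,i} + u_{k,i}ᵀ R_{k,i} u_{k,i}
  ≤ Σ_{j ∈ 𝒩̄_i} ω_{ji} x_{k,j}ᵀ A_kᵀ P_{k+1,j} P̄_{k+1,i}⁻¹ P_{k+1,j} A_k x_{k,j}`. -/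
theorem per_agent_one_step_inequality {n N : ℕ} (hN : 0 < N) (m : Fin N → ℕ)
    (nbr : Fin N → Finset (Fin N)) (hself : ∀ i, i ∈ nbr i)
    (ω : Fin N → Fin N → ℝ)
    (hω : ∀ i, ∀ j ∈ nbr i, 0 < ω i j ∧
      ω i j ≤ 1 / ((Finset.univ.filter (fun l => j ∈ nbr l)).card : ℝ))
    (M : ℕ)
    (A : ℕ → Matrix (Fin n) (Fin n) ℝ)
    (B : ∀ _ : ℕ, ∀ i : Fin N, Matrix (Fin n) (Fin (m i)) ℝ)
    (Q : ℕ → Matrix (Fin n) (Fin n) ℝ) (hQ : ∀ k, (Q k).PosDef)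
    (R : ∀ _ : ℕ, ∀ i : Fin N, Matrix (Fin (m i)) (Fin (m i)) ℝ)
    (hR : ∀ k i, (R k i).PosDef)
    (Pbar Pm Pbrv : ℕ → Fin N → Matrix (Fin n) (Fin n) ℝ)
    (hPbrvM : ∀ i, Pbrv M i = (N : ℝ) • Q M)
    (hPbar : ∀ k < M, ∀ i,
      Pbar (k+1) i = ((Pbrv (k+1) i)⁻¹ + B k i * (R k i)⁻¹ * (B k i)ᵀ)⁻¹)
    (hPm : ∀ k < M, ∀ i, Pm (k+1) i = (∑ j ∈ nbr i, ω i j • (Pbar (k+1) j)⁻¹)⁻¹)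
    (hPbrv : ∀ k < M, ∀ i, Pbrv k i = (A k)ᵀ * Pm (k+1) i * A k + (N : ℝ) • Q k)
    (xv : ℕ → Fin N → Fin n → ℝ)
    (u : ∀ _ : ℕ, ∀ i : Fin N, Fin (m i) → ℝ)
    (hxv : ∀ k < M, ∀ i, xv (k+1) i =
      (∑ j ∈ Finset.univ.filter (fun j => i ∈ nbr j),
        ω j i • ((Pbar (k+1) i)⁻¹ *ᵥ (Pm (k+1) j *ᵥ (A k *ᵥ xv k j))))
      + B k i *ᵥ u k i)
    (hu : ∀ k < M, ∀ i, u k i =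
      (-((R k i + (B k i)ᵀ * Pbrv (k+1) i * B k i)⁻¹ * ((B k i)ᵀ * Pbrv (k+1) i))) *ᵥ
      (∑ j ∈ Finset.univ.filter (fun j => i ∈ nbr j),
        ω j i • ((Pbar (k+1) i)⁻¹ *ᵥ (Pm (k+1) j *ᵥ (A k *ᵥ xv k j)))))
    :
    ∀ k < M, ∀ i,
      xv (k+1) i ⬝ᵥ (Pbrv (k+1) i *ᵥ xv (k+1) i) + u k i ⬝ᵥ (R k i *ᵥ u k i)
      ≤ ∑ j ∈ Finset.univ.filter (fun j => i ∈ nbr j),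
          ω j i * (xv k j ⬝ᵥ
            (((A k)ᵀ * Pm (k+1) j * (Pbar (k+1) i)⁻¹ * Pm (k+1) j * A k) *ᵥ xv k j)) :=
  per_agent_one_step_inequality_general m nbr hself ω hω M A B Q hQ R hR Pbar Pm Pbrv hPbrvM hPbar
    hPm hPbrv xv u hxv hu
end

section
/- Consider the multi-input system x_{k+1} = A_k x_k + Σ_{i=1}^N B_{k,i} u_{k,i} over a finite horizon M, with inputs generated by the distributed controller with virtual dynamics initialized at x_{0,i} = x_0/N. Assume the communication setup with a strongly connected directed graph, the boundedness assumption, and the joint controllability assumption. Then the achieved cost J_M = x_M^T Q_M x_M + Σ_{k=0}^{M−1} ( x_k^T Q_k x_k + Σ_{i=1}^N u_{k,i}^T R_{k,i} u_{k,i} ) satisfies J_M ≤ (1/N^2) Σ_{i=1}^N x_0^T P̆_{0,i} x_0. -/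
open Matrix Finset

/-- For symmetric matrices, `loewnerLE X Y` means `X ≤ Y` in the Loewner order. -/
def loewnerLE {p : ℕ} (X Y : Matrix (Fin p) (Fin p) ℝ) : Prop := (Y - X).PosSemidef

/-- The spectral (2-)norm of a real matrix. -/
noncomputable def spec2Norm {p q : ℕ} (A : Matrix (Fin p) (Fin q) ℝ) : ℝ :=
  ‖LinearMap.toContinuousLinearMap (Matrix.toEuclideanLin A)‖

/-- The state transition matrix `Φ_{k+h−1,k} = A_{k+h−1} ⋯ A_k` (`= I` for `h = 0`). -/
noncomputable def PhiTrans {n : ℕ} (A : ℕ → Matrix (Fin n) (Fin n) ℝ) (k : ℕ) :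
    ℕ → Matrix (Fin n) (Fin n) ℝ
  | 0 => 1
  | h + 1 => A (k + h) * PhiTrans A k h

/-!
Each agent carries a virtual state, and the virtual states always add up to the true state: the
fused weights satisfy `Σ_{i ∈ 𝒩_j} ω_ji P̄_{k+1,i}⁻¹ = P_{k+1,j}⁻¹`, so the messages of agent `j`
recombine to `A_k x_{k,j}`. The quantity `V_k = Σ_i x_{k,i}ᵀ P̆_{k,i} x_{k,i}` then dominates the
cost-to-go. Completing the square turns agent `i`'s input cost plus its share of `V_{k+1}` into
`w_iᵀ P̄_{k+1,i}⁻¹ w_i`, with `w_i` the fused message it receives; Jensen's inequality (the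
weights arriving at `i` sum to at most one) bounds the sum of these by
`Σ_j (A_k x_{k,j})ᵀ P_{k+1,j} (A_k x_{k,j}) = V_k − N Σ_j x_{k,j}ᵀ Q_k x_{k,j}`, and Cauchy–Schwarz
gives `x_kᵀ Q_k x_k ≤ N Σ_j x_{k,j}ᵀ Q_k x_{k,j}`. Telescoping yields `J_M ≤ V_0`, and
`x_{0,i} = x_0 / N` makes `V_0` the claimed bound.
-/

section QuadraticForm

variable {d m κ : Type*} [Fintype d] [Fintype m]

lemma posDef_of_smul_one_loewnerLE {p : ℕ} {c : ℝ} (hc : 0 < c) {S : Matrix (Fin p) (Fin p) ℝ}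
    (h : loewnerLE (c • 1) S) : S.PosDef := by
  simpa using PosDef.posSemidef_add h (PosDef.one.smul hc)

lemma dotProduct_transpose_mul_mul_mulVec (B : Matrix d m ℝ) (S : Matrix d d ℝ) (x y : m → ℝ) :
    x ⬝ᵥ (Bᵀ * S * B) *ᵥ y = (B *ᵥ x) ⬝ᵥ S *ᵥ (B *ᵥ y) := by
  rw [← mulVec_mulVec, ← mulVec_mulVec, dotProduct_mulVec x, vecMul_transpose]

lemma Matrix.IsHermitian.dotProduct_mulVec_comm {S : Matrix d d ℝ} (hS : S.IsHermitian)
    (x y : d → ℝ) : x ⬝ᵥ S *ᵥ y = y ⬝ᵥ S *ᵥ x := by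
  rw [← dotProduct_transpose_mulVec, ← conjTranspose_eq_transpose_of_trivial, hS.eq]

lemma Matrix.PosSemidef.two_mul_dotProduct_mulVec_le {S : Matrix d d ℝ} (hS : S.PosSemidef)
    (x y : d → ℝ) : 2 * (x ⬝ᵥ S *ᵥ y) ≤ x ⬝ᵥ S *ᵥ x + y ⬝ᵥ S *ᵥ y := by
  have h := hS.dotProduct_mulVec_nonneg (x - y)
  simp only [star_trivial, mulVec_sub, dotProduct_sub, sub_dotProduct,
    hS.isHermitian.dotProduct_mulVec_comm y x] at h
  linarith

lemma Matrix.PosSemidef.dotProduct_mulVec_sum_smul_le {S : Matrix d d ℝ} (hS : S.PosSemidef)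
    (s : Finset κ) {c : κ → ℝ} (hc : ∀ j ∈ s, 0 ≤ c j) (v : κ → d → ℝ) :
    (∑ j ∈ s, c j • v j) ⬝ᵥ S *ᵥ (∑ j ∈ s, c j • v j)
      ≤ (∑ j ∈ s, c j) * ∑ j ∈ s, c j * (v j ⬝ᵥ S *ᵥ v j) := by
  set q := fun j => v j ⬝ᵥ S *ᵥ v j
  have expand : (∑ j ∈ s, c j • v j) ⬝ᵥ S *ᵥ (∑ j ∈ s, c j • v j)
      = ∑ a ∈ s, ∑ b ∈ s, c a * c b * (v a ⬝ᵥ S *ᵥ v b) := by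
    simp only [sum_dotProduct, mulVec_sum, dotProduct_sum, mulVec_smul, dotProduct_smul,
      smul_dotProduct, smul_eq_mul, mul_sum]
    rw [sum_comm]
    exact sum_congr rfl fun a _ => sum_congr rfl fun b _ => by ring
  have split : 2 * ((∑ j ∈ s, c j) * ∑ j ∈ s, c j * q j)
      = ∑ a ∈ s, ∑ b ∈ s, c a * c b * (q a + q b) := by
    rw [two_mul, sum_mul_sum]
    nth_rewrite 1 [sum_comm]
    simp only [mul_add, sum_add_distrib]
    congr 1 <;> exact sum_congr rfl fun a _ => sum_congr rfl fun b _ => by ring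
  have cross : ∀ a ∈ s, ∀ b ∈ s,
      2 * (c a * c b * (v a ⬝ᵥ S *ᵥ v b)) ≤ c a * c b * (q a + q b) := fun a ha b hb => by
    rw [mul_left_comm]
    exact mul_le_mul_of_nonneg_left (hS.two_mul_dotProduct_mulVec_le _ _)
      (mul_nonneg (hc a ha) (hc b hb))
  have := sum_le_sum fun a ha => sum_le_sum fun b hb => cross a ha b hb
  simp only [← mul_sum] at this
  linarith

lemma Matrix.PosSemidef.dotProduct_mulVec_sum_le {S : Matrix d d ℝ} (hS : S.PosSemidef)
    (s : Finset κ) (v : κ → d → ℝ) :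
    (∑ j ∈ s, v j) ⬝ᵥ S *ᵥ (∑ j ∈ s, v j) ≤ (#s : ℝ) * ∑ j ∈ s, v j ⬝ᵥ S *ᵥ v j := by
  simpa using hS.dotProduct_mulVec_sum_smul_le s (c := 1) (fun _ _ => zero_le_one) v

variable [DecidableEq d] [DecidableEq m]

lemma Matrix.PosDef.isUnit_det {S : Matrix d d ℝ} (hS : S.PosDef) : IsUnit S.det :=
  (isUnit_iff_isUnit_det S).mp hS.isUnit

lemma Matrix.PosDef.inv_inv {S : Matrix d d ℝ} (hS : S.PosDef) : S⁻¹⁻¹ = S :=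
  nonsing_inv_nonsing_inv S hS.isUnit_det

lemma Matrix.PosDef.mulVec_dotProduct_inv_mulVec_mulVec {S : Matrix d d ℝ} (hS : S.PosDef)
    (y : d → ℝ) : (S *ᵥ y) ⬝ᵥ S⁻¹ *ᵥ (S *ᵥ y) = y ⬝ᵥ S *ᵥ y := by
  rw [← dotProduct_transpose_mul_mul_mulVec, ← conjTranspose_eq_transpose_of_trivial,
    hS.isHermitian.eq, Matrix.mul_assoc, nonsing_inv_mul _ hS.isUnit_det,
    Matrix.mul_one]

lemma posDef_inv_add_mul_inv_mul_transpose {P : Matrix d d ℝ} {R : Matrix m m ℝ}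
    (hP : P.PosDef) (hR : R.PosDef) (B : Matrix d m ℝ) : (P⁻¹ + B * R⁻¹ * Bᵀ).PosDef := by
  simpa using hP.inv.add_posSemidef (hR.inv.posSemidef.mul_mul_conjTranspose_same B)

end QuadraticForm

section LQRStep

variable {d m : Type*} [Fintype d] [Fintype m] [DecidableEq d] [DecidableEq m]
  {P : Matrix d d ℝ} {R : Matrix m m ℝ}

lemma riccati_gain_mul_eq (hP : P.PosDef) (hR : R.PosDef) (B : Matrix d m ℝ) :
    (R + Bᵀ * P * B)⁻¹ * (Bᵀ * P) * (P⁻¹ + B * R⁻¹ * Bᵀ) = R⁻¹ * Bᵀ := by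
  have hS : (R + Bᵀ * P * B).PosDef :=
    hR.add_posSemidef (by simpa using hP.posSemidef.conjTranspose_mul_mul_same B)
  have push : Bᵀ * P * (P⁻¹ + B * R⁻¹ * Bᵀ) = (R + Bᵀ * P * B) * (R⁻¹ * Bᵀ) := by
    rw [Matrix.mul_add, Matrix.add_mul, Matrix.mul_assoc _ P, mul_nonsing_inv _ hP.isUnit_det,
      ← Matrix.mul_assoc R, mul_nonsing_inv _ hR.isUnit_det]
    simp only [Matrix.mul_one, Matrix.one_mul, Matrix.mul_assoc]
  rw [Matrix.mul_assoc, push, ← Matrix.mul_assoc, nonsing_inv_mul _ hS.isUnit_det, Matrix.one_mul]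

lemma lqr_step_cost_eq (hP : P.PosDef) (hR : R.PosDef) (B : Matrix d m ℝ) (w : d → ℝ)
    {u : m → ℝ} (hu : u = -((R + Bᵀ * P * B)⁻¹ * (Bᵀ * P)) *ᵥ ((P⁻¹ + B * R⁻¹ * Bᵀ) *ᵥ w)) :
    u ⬝ᵥ R *ᵥ u + ((P⁻¹ + B * R⁻¹ * Bᵀ) *ᵥ w + B *ᵥ u) ⬝ᵥ
        P *ᵥ ((P⁻¹ + B * R⁻¹ * Bᵀ) *ᵥ w + B *ᵥ u)
      = w ⬝ᵥ (P⁻¹ + B * R⁻¹ * Bᵀ) *ᵥ w := by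
  have hu' : u = -(R⁻¹ *ᵥ (Bᵀ *ᵥ w)) := by
    rw [hu, mulVec_mulVec, Matrix.neg_mul, riccati_gain_mul_eq hP hR, neg_mulVec, mulVec_mulVec]
  have hnext : (P⁻¹ + B * R⁻¹ * Bᵀ) *ᵥ w + B *ᵥ u = P⁻¹ *ᵥ w := by
    rw [hu', mulVec_neg, mulVec_mulVec, mulVec_mulVec, add_mulVec, add_neg_cancel_right]
  have input : u ⬝ᵥ R *ᵥ u = w ⬝ᵥ (B * R⁻¹ * Bᵀ) *ᵥ w := by
    have := hR.inv.mulVec_dotProduct_inv_mulVec_mulVec (Bᵀ *ᵥ w)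
    rw [hR.inv_inv] at this
    rw [hu', mulVec_neg, neg_dotProduct, dotProduct_neg, neg_neg, this,
      ← dotProduct_transpose_mul_mul_mulVec, transpose_transpose]
  have state : (P⁻¹ *ᵥ w) ⬝ᵥ P *ᵥ (P⁻¹ *ᵥ w) = w ⬝ᵥ P⁻¹ *ᵥ w := by
    simpa only [hP.inv_inv] using hP.inv.mulVec_dotProduct_inv_mulVec_mulVec w
  rw [hnext, input, state, add_mulVec, dotProduct_add, add_comm]

end LQRStep

section Fusion

variable {ι d : Type*} [Fintype ι] [DecidableEq ι] [Fintype d] (nbr : ι → Finset ι)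
  (ω : ι → ι → ℝ)

lemma sum_sum_filter_mem_comm {M : Type*} [AddCommMonoid M] (f : ι → ι → M) :
    ∑ i, ∑ j ∈ univ.filter (fun j => i ∈ nbr j), f i j = ∑ j, ∑ i ∈ nbr j, f i j :=
  sum_comm' fun i j => by simp

lemma sum_filter_mem_le_one
    (hω : ∀ j, ∀ i ∈ nbr j, ω j i ≤ 1 / (#(univ.filter fun l => i ∈ nbr l) : ℝ)) (i : ι) :
    ∑ j ∈ univ.filter (fun j => i ∈ nbr j), ω j i ≤ 1 :=
  calc _ ≤ ∑ _j ∈ univ.filter (fun j => i ∈ nbr j),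
          1 / (#(univ.filter fun l => i ∈ nbr l) : ℝ) :=
        sum_le_sum fun j hj => hω j i (mem_filter.1 hj).2
    _ ≤ 1 := by rw [sum_const, nsmul_eq_mul, mul_one_div]; exact div_self_le_one _

lemma sum_fused_mulVec (C : ι → Matrix d d ℝ) (v : ι → d → ℝ) :
    ∑ i, ∑ j ∈ univ.filter (fun j => i ∈ nbr j), ω j i • (C i *ᵥ v j)
      = ∑ j, (∑ i ∈ nbr j, ω j i • C i) *ᵥ v j := by
  rw [sum_sum_filter_mem_comm]
  simp only [sum_mulVec, smul_mulVec]

lemma sum_fused_dotProduct_mulVec_le {S : ι → Matrix d d ℝ} (hS : ∀ i, (S i).PosSemidef)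
    (hω0 : ∀ j, ∀ i ∈ nbr j, 0 ≤ ω j i)
    (hcol : ∀ i, ∑ j ∈ univ.filter (fun j => i ∈ nbr j), ω j i ≤ 1) (v : ι → d → ℝ) :
    ∑ i, (∑ j ∈ univ.filter (fun j => i ∈ nbr j), ω j i • v j) ⬝ᵥ
        S i *ᵥ (∑ j ∈ univ.filter (fun j => i ∈ nbr j), ω j i • v j)
      ≤ ∑ j, v j ⬝ᵥ (∑ i ∈ nbr j, ω j i • S i) *ᵥ v j :=
  calc _ ≤ ∑ i, ∑ j ∈ univ.filter (fun j => i ∈ nbr j), ω j i * (v j ⬝ᵥ S i *ᵥ v j) :=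
        sum_le_sum fun i _ => by
          have hc : ∀ j ∈ univ.filter (fun j => i ∈ nbr j), 0 ≤ ω j i :=
            fun j hj => hω0 j i (mem_filter.1 hj).2
          have hq : 0 ≤ ∑ j ∈ univ.filter (fun j => i ∈ nbr j), ω j i * (v j ⬝ᵥ S i *ᵥ v j) :=
            sum_nonneg fun j hj => mul_nonneg (hc j hj)
              (by simpa using (hS i).dotProduct_mulVec_nonneg (v j))
          exact ((hS i).dotProduct_mulVec_sum_smul_le _ hc v).trans
            (mul_le_of_le_one_left hq (hcol i))
    _ = _ := by
        rw [sum_sum_filter_mem_comm]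
        simp only [sum_mulVec, dotProduct_sum, smul_mulVec, dotProduct_smul, smul_eq_mul]

end Fusion

section DistributedRiccati

variable {ι d : Type*} [Fintype d] [DecidableEq d]
  {m : ι → Type*} [∀ i, Fintype (m i)] [∀ i, DecidableEq (m i)]
  {nbr : ι → Finset ι} {ω : ι → ι → ℝ}

/-- One step of the backward recursion, relating `P̆_{k+1}` (`P'`), `P̄_{k+1}` (`Pbar`) and
`P_{k+1}` (`Pm`) through their inverses. -/
structure IsFusionStep (nbr : ι → Finset ι) (ω : ι → ι → ℝ) (P' : ι → Matrix d d ℝ)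
    (B : ∀ i, Matrix d (m i) ℝ) (R : ∀ i, Matrix (m i) (m i) ℝ) (Pbar Pm : ι → Matrix d d ℝ) :
    Prop where
  inv_pbar : ∀ i, (Pbar i)⁻¹ = (P' i)⁻¹ + B i * (R i)⁻¹ * (B i)ᵀ
  posDef_pm : ∀ i, (Pm i).PosDef
  inv_pm : ∀ i, (Pm i)⁻¹ = ∑ j ∈ nbr i, ω i j • (Pbar j)⁻¹

lemma isFusionStep_of_posDef (hself : ∀ i, i ∈ nbr i) (hω : ∀ i, ∀ j ∈ nbr i, 0 < ω i j)
    {P' Pbar Pm : ι → Matrix d d ℝ} {B : ∀ i, Matrix d (m i) ℝ} {R : ∀ i, Matrix (m i) (m i) ℝ}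
    (hP' : ∀ i, (P' i).PosDef) (hR : ∀ i, (R i).PosDef)
    (hPbar : ∀ i, Pbar i = ((P' i)⁻¹ + B i * (R i)⁻¹ * (B i)ᵀ)⁻¹)
    (hPm : ∀ i, Pm i = (∑ j ∈ nbr i, ω i j • (Pbar j)⁻¹)⁻¹) :
    IsFusionStep nbr ω P' B R Pbar Pm := by
  have hG i := posDef_inv_add_mul_inv_mul_transpose (hP' i) (hR i) (B i)
  have inv_pbar i : (Pbar i)⁻¹ = (P' i)⁻¹ + B i * (R i)⁻¹ * (B i)ᵀ := by
    rw [hPbar, (hG i).inv_inv]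
  have hS i : (∑ j ∈ nbr i, ω i j • (Pbar j)⁻¹).PosDef :=
    posDef_sum ⟨i, hself i⟩ fun j hj => (inv_pbar j ▸ hG j).smul (hω i j hj)
  exact ⟨inv_pbar, fun i => hPm i ▸ (hS i).inv, fun i => by rw [hPm, (hS i).inv_inv]⟩

lemma riccati_posDef (hself : ∀ i, i ∈ nbr i) (hω : ∀ i, ∀ j ∈ nbr i, 0 < ω i j)
    {M : ℕ} {c : ℝ} (hc : 0 < c) {A : ℕ → Matrix d d ℝ} {B : ℕ → ∀ i, Matrix d (m i) ℝ}
    {Q : ℕ → Matrix d d ℝ} {R : ℕ → ∀ i, Matrix (m i) (m i) ℝ}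
    (hQ : ∀ k, (Q k).PosDef) (hR : ∀ k i, (R k i).PosDef) {Pbar Pm Pbrv : ℕ → ι → Matrix d d ℝ}
    (hPbrvM : ∀ i, Pbrv M i = c • Q M)
    (hPbar : ∀ k < M, ∀ i, Pbar (k+1) i = ((Pbrv (k+1) i)⁻¹ + B k i * (R k i)⁻¹ * (B k i)ᵀ)⁻¹)
    (hPm : ∀ k < M, ∀ i, Pm (k+1) i = (∑ j ∈ nbr i, ω i j • (Pbar (k+1) j)⁻¹)⁻¹)
    (hPbrv : ∀ k < M, ∀ i, Pbrv k i = (A k)ᵀ * Pm (k+1) i * A k + c • Q k) :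
    ∀ k ≤ M, ∀ i, (Pbrv k i).PosDef := by
  refine fun k hk => Nat.decreasingInduction (fun k hk ih => ?_)
    (fun i => hPbrvM i ▸ (hQ M).smul hc) hk
  have hstep := isFusionStep_of_posDef hself hω ih (hR k) (hPbar k hk) (hPm k hk)
  refine fun i => hPbrv k hk i ▸ PosDef.posSemidef_add ?_ ((hQ k).smul hc)
  simpa using (hstep.posDef_pm i).posSemidef.conjTranspose_mul_mul_same (A k)

end DistributedRiccati

section ClosedLoop

variable {ι d : Type*} [Fintype ι] [DecidableEq ι] [Fintype d] [DecidableEq d]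
  {m : ι → Type*} [∀ i, Fintype (m i)] [∀ i, DecidableEq (m i)]
  {nbr : ι → Finset ι} {ω : ι → ι → ℝ}

lemma IsFusionStep.sum_fused_eq {P' Pbar Pm : ι → Matrix d d ℝ} {B : ∀ i, Matrix d (m i) ℝ}
    {R : ∀ i, Matrix (m i) (m i) ℝ} (h : IsFusionStep nbr ω P' B R Pbar Pm) (y : ι → d → ℝ) :
    ∑ i, ∑ j ∈ univ.filter (fun j => i ∈ nbr j), ω j i • ((Pbar i)⁻¹ *ᵥ (Pm j *ᵥ y j))
      = ∑ j, y j := by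
  rw [sum_fused_mulVec]
  refine sum_congr rfl fun j _ => ?_
  rw [← h.inv_pm, mulVec_mulVec, nonsing_inv_mul _ (h.posDef_pm j).isUnit_det, one_mulVec]

lemma sum_virtual_state_eq {M : ℕ} {A : ℕ → Matrix d d ℝ} {B : ℕ → ∀ i, Matrix d (m i) ℝ}
    {R : ℕ → ∀ i, Matrix (m i) (m i) ℝ} {Pbar Pm Pbrv : ℕ → ι → Matrix d d ℝ}
    (hfus : ∀ k < M, IsFusionStep nbr ω (Pbrv (k+1)) (B k) (R k) (Pbar (k+1)) (Pm (k+1)))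
    {x : ℕ → d → ℝ} {xv : ℕ → ι → d → ℝ} {u : ℕ → ∀ i, m i → ℝ}
    (hx : ∀ k < M, x (k+1) = A k *ᵥ x k + ∑ i, B k i *ᵥ u k i)
    (hxv : ∀ k < M, ∀ i, xv (k+1) i =
      (∑ j ∈ univ.filter (fun j => i ∈ nbr j),
        ω j i • ((Pbar (k+1) i)⁻¹ *ᵥ (Pm (k+1) j *ᵥ (A k *ᵥ xv k j))))
      + B k i *ᵥ u k i)
    (h0 : ∑ i, xv 0 i = x 0) :
    ∀ k ≤ M, ∑ i, xv k i = x k := by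
  intro k hk
  induction k with
  | zero => exact h0
  | succ k ih =>
    rw [hx k hk, sum_congr rfl fun i _ => hxv k hk i, sum_add_distrib,
      (hfus k hk).sum_fused_eq, ← mulVec_sum, ih (Nat.le_of_succ_le hk)]

lemma distributed_step_cost_le (hω : ∀ i, ∀ j ∈ nbr i, 0 ≤ ω i j)
    (hcol : ∀ i, ∑ j ∈ univ.filter (fun j => i ∈ nbr j), ω j i ≤ 1)
    {P' Pbar Pm : ι → Matrix d d ℝ} {B : ∀ i, Matrix d (m i) ℝ} {R : ∀ i, Matrix (m i) (m i) ℝ}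
    (hP' : ∀ i, (P' i).PosDef) (hR : ∀ i, (R i).PosDef) (hfus : IsFusionStep nbr ω P' B R Pbar Pm)
    {A Q : Matrix d d ℝ} {c : ℝ} {P : ι → Matrix d d ℝ} (hP : ∀ i, P i = Aᵀ * Pm i * A + c • Q)
    {xv xv' : ι → d → ℝ} {u : ∀ i, m i → ℝ}
    (hxv' : ∀ i, xv' i =
      (∑ j ∈ univ.filter (fun j => i ∈ nbr j), ω j i • ((Pbar i)⁻¹ *ᵥ (Pm j *ᵥ (A *ᵥ xv j))))
      + B i *ᵥ u i)
    (hu : ∀ i, u i = (-((R i + (B i)ᵀ * P' i * B i)⁻¹ * ((B i)ᵀ * P' i))) *ᵥ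
      (∑ j ∈ univ.filter (fun j => i ∈ nbr j), ω j i • ((Pbar i)⁻¹ *ᵥ (Pm j *ᵥ (A *ᵥ xv j))))) :
    ∑ i, u i ⬝ᵥ R i *ᵥ u i + ∑ i, xv' i ⬝ᵥ P' i *ᵥ xv' i
      ≤ ∑ i, xv i ⬝ᵥ P i *ᵥ xv i - c * ∑ i, xv i ⬝ᵥ Q *ᵥ xv i := by
  set v := fun j => Pm j *ᵥ (A *ᵥ xv j)
  set w := fun i => ∑ j ∈ univ.filter (fun j => i ∈ nbr j), ω j i • v j
  have hz i : ∑ j ∈ univ.filter (fun j => i ∈ nbr j), ω j i • ((Pbar i)⁻¹ *ᵥ v j)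
      = (Pbar i)⁻¹ *ᵥ w i := by
    simp only [w, mulVec_sum, mulVec_smul]
  have hagent i : u i ⬝ᵥ R i *ᵥ u i + xv' i ⬝ᵥ P' i *ᵥ xv' i = w i ⬝ᵥ (Pbar i)⁻¹ *ᵥ w i := by
    rw [hxv' i, hz, hfus.inv_pbar]
    exact lqr_step_cost_eq (hP' i) (hR i) (B i) (w i) (by rw [hu i, hz, hfus.inv_pbar])
  have hS i : ((Pbar i)⁻¹).PosSemidef :=
    (hfus.inv_pbar i ▸ posDef_inv_add_mul_inv_mul_transpose (hP' i) (hR i) (B i)).posSemidef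
  calc ∑ i, u i ⬝ᵥ R i *ᵥ u i + ∑ i, xv' i ⬝ᵥ P' i *ᵥ xv' i
      = ∑ i, w i ⬝ᵥ (Pbar i)⁻¹ *ᵥ w i := by
        rw [← sum_add_distrib]
        exact sum_congr rfl fun i _ => hagent i
    _ ≤ ∑ j, v j ⬝ᵥ (∑ i ∈ nbr j, ω j i • (Pbar i)⁻¹) *ᵥ v j :=
        sum_fused_dotProduct_mulVec_le nbr ω hS hω hcol v
    _ = ∑ j, (A *ᵥ xv j) ⬝ᵥ Pm j *ᵥ (A *ᵥ xv j) := by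
        refine sum_congr rfl fun j _ => ?_
        rw [← hfus.inv_pm, (hfus.posDef_pm j).mulVec_dotProduct_inv_mulVec_mulVec]
    _ = ∑ i, xv i ⬝ᵥ P i *ᵥ xv i - c * ∑ i, xv i ⬝ᵥ Q *ᵥ xv i := by
        simp only [hP, add_mulVec, dotProduct_add, dotProduct_transpose_mul_mul_mulVec,
          sum_add_distrib, smul_mulVec, dotProduct_smul, smul_eq_mul, mul_sum]
        ring

end ClosedLoop

theorem distributed_lqr_cost_bound_general {n N : ℕ} (hN : 0 < N) (m : Fin N → ℕ)
    (nbr : Fin N → Finset (Fin N)) (hself : ∀ i, i ∈ nbr i)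
    (ω : Fin N → Fin N → ℝ)
    (hω : ∀ i, ∀ j ∈ nbr i, 0 < ω i j ∧
      ω i j ≤ 1 / ((Finset.univ.filter (fun l => j ∈ nbr l)).card : ℝ))
    (M : ℕ)
    (A : ℕ → Matrix (Fin n) (Fin n) ℝ)
    (B : ∀ _ : ℕ, ∀ i : Fin N, Matrix (Fin n) (Fin (m i)) ℝ)
    (Q : ℕ → Matrix (Fin n) (Fin n) ℝ)
    (R : ∀ _ : ℕ, ∀ i : Fin N, Matrix (Fin (m i)) (Fin (m i)) ℝ)
    (κQ1 κQ2 κR1 κR2 : ℝ)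
    (hκQ1 : 0 < κQ1) (hκR1 : 0 < κR1)
    (hQbd : ∀ k, loewnerLE (κQ1 • (1 : Matrix (Fin n) (Fin n) ℝ)) (Q k) ∧
      loewnerLE (Q k) (κQ2 • (1 : Matrix (Fin n) (Fin n) ℝ)))
    (hRbd : ∀ k i, loewnerLE (κR1 • (1 : Matrix (Fin (m i)) (Fin (m i)) ℝ)) (R k i) ∧
      loewnerLE (R k i) (κR2 • (1 : Matrix (Fin (m i)) (Fin (m i)) ℝ)))
    (Pbar Pm Pbrv : ℕ → Fin N → Matrix (Fin n) (Fin n) ℝ)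
    (hPbrvM : ∀ i, Pbrv M i = (N : ℝ) • Q M)
    (hPbar : ∀ k < M, ∀ i,
      Pbar (k+1) i = ((Pbrv (k+1) i)⁻¹ + B k i * (R k i)⁻¹ * (B k i)ᵀ)⁻¹)
    (hPm : ∀ k < M, ∀ i, Pm (k+1) i = (∑ j ∈ nbr i, ω i j • (Pbar (k+1) j)⁻¹)⁻¹)
    (hPbrv : ∀ k < M, ∀ i, Pbrv k i = (A k)ᵀ * Pm (k+1) i * A k + (N : ℝ) • Q k)
    (x : ℕ → Fin n → ℝ) (xv : ℕ → Fin N → Fin n → ℝ)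
    (u : ∀ _ : ℕ, ∀ i : Fin N, Fin (m i) → ℝ)
    (hx : ∀ k < M, x (k+1) = A k *ᵥ x k + ∑ i, B k i *ᵥ u k i)
    (hxv0 : ∀ i, xv 0 i = (N : ℝ)⁻¹ • x 0)
    (hxv : ∀ k < M, ∀ i, xv (k+1) i =
      (∑ j ∈ Finset.univ.filter (fun j => i ∈ nbr j),
        ω j i • ((Pbar (k+1) i)⁻¹ *ᵥ (Pm (k+1) j *ᵥ (A k *ᵥ xv k j))))
      + B k i *ᵥ u k i)
    (hu : ∀ k < M, ∀ i, u k i =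
      (-((R k i + (B k i)ᵀ * Pbrv (k+1) i * B k i)⁻¹ * ((B k i)ᵀ * Pbrv (k+1) i))) *ᵥ
      (∑ j ∈ Finset.univ.filter (fun j => i ∈ nbr j),
        ω j i • ((Pbar (k+1) i)⁻¹ *ᵥ (Pm (k+1) j *ᵥ (A k *ᵥ xv k j))))) :
    x M ⬝ᵥ (Q M *ᵥ x M)
      + ∑ k ∈ Finset.range M, (x k ⬝ᵥ (Q k *ᵥ x k) + ∑ i, u k i ⬝ᵥ (R k i *ᵥ u k i))
    ≤ (1 / (N : ℝ) ^ 2) * ∑ i, x 0 ⬝ᵥ (Pbrv 0 i *ᵥ x 0) := by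
  have hNpos : (0 : ℝ) < N := Nat.cast_pos.mpr hN
  have hQ k := posDef_of_smul_one_loewnerLE hκQ1 (hQbd k).1
  have hR k i := posDef_of_smul_one_loewnerLE hκR1 (hRbd k i).1
  have hωpos i j hj := (hω i j hj).1
  have hP := riccati_posDef hself hωpos hNpos hQ hR hPbrvM hPbar hPm hPbrv
  have hfus k (hk : k < M) :=
    isFusionStep_of_posDef hself hωpos (hP (k+1) hk) (hR k) (hPbar k hk) (hPm k hk)
  have hsum0 : ∑ i, xv 0 i = x 0 := by
    rw [sum_congr rfl fun i _ => hxv0 i, sum_const, card_univ, Fintype.card_fin,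
      ← Nat.cast_smul_eq_nsmul ℝ, smul_smul, mul_inv_cancel₀ hNpos.ne', one_smul]
  have hsum := sum_virtual_state_eq hfus hx hxv hsum0
  have hQsum k (hk : k ≤ M) : x k ⬝ᵥ Q k *ᵥ x k ≤ N * ∑ i, xv k i ⬝ᵥ Q k *ᵥ xv k i := by
    simpa [hsum k hk] using (hQ k).posSemidef.dotProduct_mulVec_sum_le univ (xv k)
  set V := fun k => ∑ i, xv k i ⬝ᵥ Pbrv k i *ᵥ xv k i
  have hstep k (hk : k < M) :
      x k ⬝ᵥ Q k *ᵥ x k + ∑ i, u k i ⬝ᵥ R k i *ᵥ u k i ≤ V k - V (k+1) := by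
    have := distributed_step_cost_le (fun i j hj => (hωpos i j hj).le)
      (sum_filter_mem_le_one nbr ω fun i j hj => (hω i j hj).2) (hP (k+1) hk) (hR k) (hfus k hk)
      (hPbrv k hk) (hxv k hk) (hu k hk)
    linarith [hQsum k hk.le]
  have hterm : x M ⬝ᵥ Q M *ᵥ x M ≤ V M := by
    simpa [V, hPbrvM, smul_mulVec, mul_sum] using hQsum M le_rfl
  have hV0 : V 0 = 1 / (N : ℝ) ^ 2 * ∑ i, x 0 ⬝ᵥ Pbrv 0 i *ᵥ x 0 := by
    simp only [V, hxv0, mulVec_smul, dotProduct_smul, smul_dotProduct, smul_eq_mul, mul_sum]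
    exact sum_congr rfl fun i _ => by ring
  linarith [sum_le_sum fun k hk => hstep k (mem_range.1 hk), sum_range_sub' V M]

/-- Theorem 2 of the paper: for the multi-input system driven by the fully distributed
LQR-based controller (built from the backward recursion and the virtual dynamics
initialized at `x_{0,i} = x_0/N`), under strong connectivity, boundedness and joint
controllability, the achieved finite-horizon cost satisfies
`J_M ≤ (1/N²) Σ_i x_0ᵀ P̆_{0,i} x_0`. -/
theorem distributed_lqr_cost_bound {n N : ℕ} (hN : 0 < N) (m : Fin N → ℕ)
    (nbr : Fin N → Finset (Fin N)) (hself : ∀ i, i ∈ nbr i)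
    (hconn : ∀ i j : Fin N, ∃ l : ℕ, 0 < l ∧
      0 < (((Matrix.of fun a b => if b ∈ nbr a then (1 : ℝ) else 0) :
        Matrix (Fin N) (Fin N) ℝ) ^ l) i j)
    (ω : Fin N → Fin N → ℝ)
    (hω : ∀ i, ∀ j ∈ nbr i, 0 < ω i j ∧
      ω i j ≤ 1 / ((Finset.univ.filter (fun l => j ∈ nbr l)).card : ℝ))
    (M : ℕ) (hM : 0 < M)
    (A : ℕ → Matrix (Fin n) (Fin n) ℝ)
    (B : ∀ _ : ℕ, ∀ i : Fin N, Matrix (Fin n) (Fin (m i)) ℝ)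
    (Q : ℕ → Matrix (Fin n) (Fin n) ℝ)
    (R : ∀ _ : ℕ, ∀ i : Fin N, Matrix (Fin (m i)) (Fin (m i)) ℝ)
    (κA1 κA2 κB κQ1 κQ2 κR1 κR2 : ℝ)
    (hκA1 : 0 < κA1) (hκA2 : 0 < κA2) (hκB : 0 < κB) (hκQ1 : 0 < κQ1)
    (hκQ2 : 0 < κQ2) (hκR1 : 0 < κR1) (hκR2 : 0 < κR2)
    (hAinv : ∀ k, IsUnit (A k).det)
    (hAbd : ∀ k, κA1 ≤ spec2Norm (A k) ∧ spec2Norm (A k) ≤ κA2)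
    (hBbd : ∀ k i, spec2Norm (B k i) ≤ κB)
    (hQbd : ∀ k, loewnerLE (κQ1 • (1 : Matrix (Fin n) (Fin n) ℝ)) (Q k) ∧
      loewnerLE (Q k) (κQ2 • (1 : Matrix (Fin n) (Fin n) ℝ)))
    (hRbd : ∀ k i, loewnerLE (κR1 • (1 : Matrix (Fin (m i)) (Fin (m i)) ℝ)) (R k i) ∧
      loewnerLE (R k i) (κR2 • (1 : Matrix (Fin (m i)) (Fin (m i)) ℝ)))
    (η : ℝ) (hη : 0 < η) (L : ℕ) (hL : 0 < L)
    (hJC : ∀ k, ((∑ h ∈ Finset.range L,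
        PhiTrans A k h * (∑ i, B (k + h) i * (R (k + h) i)⁻¹ * (B (k + h) i)ᵀ) *
          (PhiTrans A k h)ᵀ)
      - η • (1 : Matrix (Fin n) (Fin n) ℝ)).PosSemidef)
    (Pbar Pm Pbrv : ℕ → Fin N → Matrix (Fin n) (Fin n) ℝ)
    (hPbrvM : ∀ i, Pbrv M i = (N : ℝ) • Q M)
    (hPbar : ∀ k < M, ∀ i,
      Pbar (k+1) i = ((Pbrv (k+1) i)⁻¹ + B k i * (R k i)⁻¹ * (B k i)ᵀ)⁻¹)
    (hPm : ∀ k < M, ∀ i, Pm (k+1) i = (∑ j ∈ nbr i, ω i j • (Pbar (k+1) j)⁻¹)⁻¹)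
    (hPbrv : ∀ k < M, ∀ i, Pbrv k i = (A k)ᵀ * Pm (k+1) i * A k + (N : ℝ) • Q k)
    (x : ℕ → Fin n → ℝ) (xv : ℕ → Fin N → Fin n → ℝ)
    (u : ∀ _ : ℕ, ∀ i : Fin N, Fin (m i) → ℝ)
    (hx : ∀ k < M, x (k+1) = A k *ᵥ x k + ∑ i, B k i *ᵥ u k i)
    (hxv0 : ∀ i, xv 0 i = (N : ℝ)⁻¹ • x 0)
    (hxv : ∀ k < M, ∀ i, xv (k+1) i =
      (∑ j ∈ Finset.univ.filter (fun j => i ∈ nbr j),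
        ω j i • ((Pbar (k+1) i)⁻¹ *ᵥ (Pm (k+1) j *ᵥ (A k *ᵥ xv k j))))
      + B k i *ᵥ u k i)
    (hu : ∀ k < M, ∀ i, u k i =
      (-((R k i + (B k i)ᵀ * Pbrv (k+1) i * B k i)⁻¹ * ((B k i)ᵀ * Pbrv (k+1) i))) *ᵥ
      (∑ j ∈ Finset.univ.filter (fun j => i ∈ nbr j),
        ω j i • ((Pbar (k+1) i)⁻¹ *ᵥ (Pm (k+1) j *ᵥ (A k *ᵥ xv k j))))) :
    x M ⬝ᵥ (Q M *ᵥ x M)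
      + ∑ k ∈ Finset.range M, (x k ⬝ᵥ (Q k *ᵥ x k) + ∑ i, u k i ⬝ᵥ (R k i *ᵥ u k i))
    ≤ (1 / (N : ℝ) ^ 2) * ∑ i, x 0 ⬝ᵥ (Pbrv 0 i *ᵥ x 0) :=
  distributed_lqr_cost_bound_general hN m nbr hself ω hω M A B Q R κQ1 κQ2 κR1 κR2 hκQ1 hκR1 hQbd
    hRbd Pbar Pm Pbrv hPbrvM hPbar hPm hPbrv x xv u hx hxv0 hxv hu
end

section
/- In the time-invariant setting (A_k = A invertible, B_{k,i} = B_i, Q_k = Q ≻ 0, R_{k,i} = R_i ≻ 0), define for each agent i the sequence S_i(0) = N Q and S_i(t+1) = A^T ( Σ_{j∈𝒩_i} ω_ij ( S_j(t)^{-1} + B_j R_j^{-1} B_j^T ) )^{-1} A + N Q. Then for all t ≥ 0 and every i, S_i(t+1) − S_i(t) is symmetric positive definite; i.e., the sequence (S_i(t))_{t≥0} is strictly increasing in the Loewner order. Equivalently, for the backward recursion on any horizon M, P̆_{k−1,i} > P̆_{k,i} for all k ∈ {1,…,M} and all i. -/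
/-!
Inversion is strictly antitone on positive definite matrices, because
`P⁻¹ - Q⁻¹ = (Pᴴ (Q - P)⁻¹ P + P)⁻¹`. One step of the recursion inverts each `S j`, takes a
positive combination over the neighbours, inverts again and conjugates by the invertible `A`,
so it is strictly monotone in the Loewner order. Since `S 1 - S 0 = Aᵀ (…)⁻¹ A ≻ 0`, induction
propagates the strict increase.
-/

open Matrix Finset

namespace Matrix

variable {n K : Type*} [Fintype n] [DecidableEq n] [Field K] [PartialOrder K] [StarRing K]
  [AddLeftMono K]

lemma PosDef.inv_sub_inv {P Q : Matrix n n K} (hP : P.PosDef) (hQP : (Q - P).PosDef) :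
    (P⁻¹ - Q⁻¹).PosDef := by
  have hQ : Q.PosDef := by simpa using hP.add hQP
  have hD : IsUnit (Q - P).det := (isUnit_iff_isUnit_det _).mp hQP.isUnit
  have key : P⁻¹ - Q⁻¹ = (Pᴴ * (Q - P)⁻¹ * P + P)⁻¹ := by
    have factor : Pᴴ * (Q - P)⁻¹ * P + P = Q * (Q - P)⁻¹ * P := by
      rw [hP.isHermitian.eq]
      calc P * (Q - P)⁻¹ * P + P = P * (Q - P)⁻¹ * P + (Q - P) * (Q - P)⁻¹ * P := by
            rw [mul_nonsing_inv _ hD, Matrix.one_mul]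
        _ = Q * (Q - P)⁻¹ * P := by rw [← Matrix.add_mul, ← Matrix.add_mul, add_sub_cancel]
    rw [factor, Matrix.mul_inv_rev, Matrix.mul_inv_rev, nonsing_inv_nonsing_inv _ hD,
      Matrix.inv_sub_inv (iff_of_true hP.isUnit hQ.isUnit), Matrix.mul_assoc]
  rw [key]
  exact (PosDef.posSemidef_add (hQP.inv.posSemidef.conjTranspose_mul_mul_same P) hP).inv

lemma PosDef.transpose_mul_mul_of_isUnit {A X : Matrix n n ℝ} (hX : X.PosDef) (hA : IsUnit A) :
    (Aᵀ * X * A).PosDef := by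
  simpa [star_eq_conjTranspose] using (IsUnit.posDef_star_left_conjugate_iff hA).mpr hX

end Matrix

section DistributedRiccati

variable {ι n : Type*} [Fintype n] [DecidableEq n]

noncomputable def riccatiStep (nbr : ι → Finset ι) (ω : ι → ι → ℝ) (A : Matrix n n ℝ)
    (G : ι → Matrix n n ℝ) (C : Matrix n n ℝ) (S : ι → Matrix n n ℝ) (i : ι) : Matrix n n ℝ :=
  Aᵀ * (∑ j ∈ nbr i, ω i j • ((S j)⁻¹ + G j))⁻¹ * A + C

variable {nbr : ι → Finset ι} {ω : ι → ι → ℝ} {A : Matrix n n ℝ} {G : ι → Matrix n n ℝ}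
  {C : Matrix n n ℝ} {S S' : ι → Matrix n n ℝ} {i : ι}

lemma posDef_sum_smul_inv_add (hnbr : (nbr i).Nonempty) (hω : ∀ j ∈ nbr i, 0 < ω i j)
    (hG : ∀ j, (G j).PosSemidef) (hS : ∀ j, (S j).PosDef) :
    (∑ j ∈ nbr i, ω i j • ((S j)⁻¹ + G j)).PosDef :=
  posDef_sum hnbr fun j hj => ((hS j).inv.add_posSemidef (hG j)).smul (hω j hj)

lemma riccatiStep_sub_posDef (hnbr : (nbr i).Nonempty) (hω : ∀ j ∈ nbr i, 0 < ω i j)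
    (hA : IsUnit A) (hG : ∀ j, (G j).PosSemidef) (hS : ∀ j, (S j).PosDef) :
    (riccatiStep nbr ω A G C S i - C).PosDef := by
  rw [riccatiStep, add_sub_cancel_right]
  exact (posDef_sum_smul_inv_add hnbr hω hG hS).inv.transpose_mul_mul_of_isUnit hA

lemma riccatiStep_posDef (hnbr : (nbr i).Nonempty) (hω : ∀ j ∈ nbr i, 0 < ω i j)
    (hA : IsUnit A) (hG : ∀ j, (G j).PosSemidef) (hC : C.PosSemidef) (hS : ∀ j, (S j).PosDef) :
    (riccatiStep nbr ω A G C S i).PosDef := by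
  simpa using (riccatiStep_sub_posDef (C := C) hnbr hω hA hG hS).add_posSemidef hC

lemma riccatiStep_sub_riccatiStep_posDef (hnbr : (nbr i).Nonempty)
    (hω : ∀ j ∈ nbr i, 0 < ω i j) (hA : IsUnit A) (hG : ∀ j, (G j).PosSemidef)
    (hS : ∀ j, (S j).PosDef) (hSS' : ∀ j, (S' j - S j).PosDef) :
    (riccatiStep nbr ω A G C S' i - riccatiStep nbr ω A G C S i).PosDef := by
  have hS' : ∀ j, (S' j).PosDef := fun j => by simpa using (hS j).add (hSS' j)
  have hfused : (∑ j ∈ nbr i, ω i j • ((S j)⁻¹ + G j)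
      - ∑ j ∈ nbr i, ω i j • ((S' j)⁻¹ + G j)).PosDef := by
    rw [← sum_sub_distrib]
    refine posDef_sum hnbr fun j hj => ?_
    rw [← smul_sub, add_sub_add_right_eq_sub]
    exact ((hS j).inv_sub_inv (hSS' j)).smul (hω j hj)
  rw [riccatiStep, riccatiStep, add_sub_add_right_eq_sub, ← Matrix.sub_mul, ← Matrix.mul_sub]
  refine PosDef.transpose_mul_mul_of_isUnit ?_ hA
  exact (posDef_sum_smul_inv_add hnbr hω hG hS').inv_sub_inv hfused

lemma riccatiStep_iterate_sub_posDef (hnbr : ∀ i, (nbr i).Nonempty)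
    (hω : ∀ i, ∀ j ∈ nbr i, 0 < ω i j) (hA : IsUnit A) (hG : ∀ j, (G j).PosSemidef)
    (hC : C.PosDef) {P : ℕ → ι → Matrix n n ℝ} (hP0 : P 0 = fun _ => C)
    (hPsucc : ∀ t, P (t + 1) = riccatiStep nbr ω A G C (P t)) :
    ∀ t i, (P (t + 1) i - P t i).PosDef := by
  have hP : ∀ t j, (P t j).PosDef := by
    intro t
    induction t with
    | zero => simpa only [hP0] using fun _ => hC
    | succ t ih =>
      simpa only [hPsucc] using fun j => riccatiStep_posDef (hnbr j) (hω j) hA hG hC.posSemidef ih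
  intro t
  induction t with
  | zero =>
    intro i
    rw [hPsucc, hP0]
    exact riccatiStep_sub_posDef (hnbr i) (hω i) hA hG fun _ => hC
  | succ t ih =>
    intro i
    simpa only [← hPsucc] using
      riccatiStep_sub_riccatiStep_posDef (C := C) (hnbr i) (hω i) hA hG (hP t) ih

end DistributedRiccati

/-- Monotonicity step in the proof of Theorem 3 of the paper: in the time-invariant
setting, the per-agent sequence `S_i(0) = N Q`,
`S_i(t+1) = Aᵀ (Σ_{j∈𝒩_i} ω_{ij} (S_j(t)⁻¹ + B_j R_j⁻¹ B_jᵀ))⁻¹ A + N Q`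
is strictly increasing in the Loewner order: `S_i(t+1) − S_i(t)` is positive definite
for every `t` and every agent `i`. -/
theorem time_invariant_recursion_monotone {n N : ℕ} (hN : 0 < N) (m : Fin N → ℕ)
    (nbr : Fin N → Finset (Fin N)) (hself : ∀ i, i ∈ nbr i)
    (ω : Fin N → Fin N → ℝ)
    (hω : ∀ i, ∀ j ∈ nbr i, 0 < ω i j ∧
      ω i j ≤ 1 / ((Finset.univ.filter (fun l => j ∈ nbr l)).card : ℝ))
    (A : Matrix (Fin n) (Fin n) ℝ) (hA : IsUnit A.det)
    (B : ∀ i : Fin N, Matrix (Fin n) (Fin (m i)) ℝ)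
    (Q : Matrix (Fin n) (Fin n) ℝ) (hQ : Q.PosDef)
    (R : ∀ i : Fin N, Matrix (Fin (m i)) (Fin (m i)) ℝ) (hR : ∀ i, (R i).PosDef)
    (S : ℕ → Fin N → Matrix (Fin n) (Fin n) ℝ)
    (hS0 : ∀ i, S 0 i = (N : ℝ) • Q)
    (hSsucc : ∀ t i, S (t+1) i =
      Aᵀ * (∑ j ∈ nbr i, ω i j • ((S t j)⁻¹ + B j * (R j)⁻¹ * (B j)ᵀ))⁻¹ * A
        + (N : ℝ) • Q) :
    ∀ t i, (S (t+1) i - S t i).PosDef := by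
  refine riccatiStep_iterate_sub_posDef (G := fun j => B j * (R j)⁻¹ * (B j)ᵀ)
    (fun i => ⟨i, hself i⟩) (fun i j hj => (hω i j hj).1) ((isUnit_iff_isUnit_det A).mpr hA)
    (fun j => ?_) (hQ.smul (Nat.cast_pos.mpr hN)) (funext hS0) (fun t => funext (hSsucc t))
  simpa using (hR j).inv.posSemidef.mul_mul_conjTranspose_same (B j)
end

section
/- Consider the time-invariant setting (A_k = A invertible, B_{k,i} = B_i, Q_k = Q ≻ 0, R_{k,i} = R_i ≻ 0) with the communication setup on a strongly connected directed graph, the boundedness assumption, and the joint controllability assumption, and let P̆_i, P_i, P̄_i be the steady-state matrices satisfying P̆_i = A^T P_i A + N Q, P_i = ( Σ_{j∈𝒩_i} ω_ij ( P̆_j^{-1} + B_j R_j^{-1} B_j^T ) )^{-1}, P̄_i = ( P̆_i^{-1} + B_i R_i^{-1} B_i^T )^{-1}. Suppose the multi-input system x_{k+1} = A x_k + Σ_{i=1}^N B_i u_{k,i} is driven by the stationary distributed controller: each agent i runs the virtual system x_{k+1,i} = Σ_{j∈𝒩̄_i} ω_ji P̄_i^{-1} P_j A x_{k,j} + B_i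 u_{k,i} with x_{0,i} = x_0/N and applies u_{k,i} = K_i Σ_{j∈𝒩̄_i} ω_ji P̄_i^{-1} P_j A x_{k,j} with K_i = −(R_i + B_i^T P̆_i B_i)^{-1} B_i^T P̆_i. Then the infinite-horizon cost J_∞ = Σ_{k=0}^∞ ( x_k^T Q x_k + Σ_{i=1}^N u_{k,i}^T R_i u_{k,i} ) satisfies J_∞ ≤ (1/N^2) Σ_{i=1}^N x_0^T P̆_i x_0. -/
open Matrix Finset

/-!
Let `V = ∑ᵢ xᵢᵀ P̆ᵢ xᵢ` over the virtual states `xᵢ`, which always sum to the true state `x`.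
In one step agent `i` moves its fused prediction `zᵢ` to `zᵢ + Bᵢ uᵢ` with `uᵢ = Kᵢ zᵢ`;
completing the square and the Woodbury identity show that this costs exactly `zᵢᵀ P̄ᵢ zᵢ`.
Since `zᵢ = P̄ᵢ⁻¹ ∑ⱼ ω_ji Pⱼ A xⱼ` with weights summing to at most one, convexity of
`w ↦ wᵀ P̄ᵢ⁻¹ w` and `Pⱼ⁻¹ = ∑ᵢ ω_ji P̄ᵢ⁻¹` bound `∑ᵢ zᵢᵀ P̄ᵢ zᵢ` by
`∑ⱼ (A xⱼ)ᵀ Pⱼ (A xⱼ) = V - N ∑ⱼ xⱼᵀ Q xⱼ`, and convexity once more gives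
`xᵀ Q x ≤ N ∑ⱼ xⱼᵀ Q xⱼ`. Hence stage cost `+ V(k+1) ≤ V(k)`, and the total cost telescopes
to at most `V(0) = N⁻² ∑ᵢ x₀ᵀ P̆ᵢ x₀`.
-/

namespace Matrix

variable {σ τ : Type*} [Fintype σ] [Fintype τ]

theorem mulVec_dotProduct_mulVec_mulVec_s15 {α : Type*} [CommSemiring α] (G : Matrix σ τ α)
    (M : Matrix σ σ α) (v : τ → α) :
    (G *ᵥ v) ⬝ᵥ (M *ᵥ (G *ᵥ v)) = v ⬝ᵥ ((Gᵀ * M * G) *ᵥ v) := by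
  rw [← mulVec_mulVec, ← mulVec_mulVec, dotProduct_mulVec v, vecMul_transpose]

theorem dotProduct_mulVec_mulVec_of_mul_eq_one {α : Type*} [CommSemiring α] [DecidableEq σ]
    {M N : Matrix σ σ α} (h : N * M = 1) (w : σ → α) :
    (M *ᵥ w) ⬝ᵥ (N *ᵥ (M *ᵥ w)) = w ⬝ᵥ (M *ᵥ w) := by
  rw [mulVec_mulVec, h, one_mulVec, dotProduct_comm]

theorem inv_eq_of_eq_nonsing_inv {α : Type*} [CommRing α] [DecidableEq σ]
    {P M : Matrix σ σ α} (hP : IsUnit P) (h : P = M⁻¹) : P⁻¹ = M :=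
  inv_inj (by rw [nonsing_inv_nonsing_inv _ ((isUnit_iff_isUnit_det P).1 hP), h])
    (isUnit_nonsing_inv_det_iff.2 ((isUnit_iff_isUnit_det P).1 hP))

namespace PosSemidef

theorem dotProduct_mulVec_self_nonneg {M : Matrix σ σ ℝ} (hM : M.PosSemidef) (x : σ → ℝ) :
    0 ≤ x ⬝ᵥ (M *ᵥ x) := by
  simpa using hM.dotProduct_mulVec_nonneg x


theorem dotProduct_mulVec_sum_smul_le_s15 {ι : Type*} {M : Matrix σ σ ℝ} (hM : M.PosSemidef)
    {s : Finset ι} {α : ι → ℝ} (hα : ∀ j ∈ s, 0 ≤ α j) (hs : ∑ j ∈ s, α j ≤ 1)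
    (v : ι → σ → ℝ) :
    (∑ j ∈ s, α j • v j) ⬝ᵥ (M *ᵥ ∑ j ∈ s, α j • v j)
      ≤ ∑ j ∈ s, α j * (v j ⬝ᵥ (M *ᵥ v j)) := by
  set w := ∑ j ∈ s, α j • v j
  have hsymm : ∀ a b, b ⬝ᵥ (M *ᵥ a) = a ⬝ᵥ (M *ᵥ b) := fun a b => by
    rw [← dotProduct_transpose_mulVec, isHermitian_iff_isSymm.1 hM.1]
  have hcross : ∑ j ∈ s, α j * (v j ⬝ᵥ (M *ᵥ w)) = w ⬝ᵥ (M *ᵥ w) := by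
    simp only [w, sum_dotProduct, smul_dotProduct, smul_eq_mul]
  -- with `q x = xᵀ M x`: `∑ αⱼ q(vⱼ) - q(w) = ∑ αⱼ q(vⱼ - w) + (1 - ∑ αⱼ) q(w) ≥ 0`
  have hdefect : ∑ j ∈ s, α j * ((v j - w) ⬝ᵥ (M *ᵥ (v j - w)))
      = ∑ j ∈ s, α j * (v j ⬝ᵥ (M *ᵥ v j)) - 2 * (w ⬝ᵥ (M *ᵥ w))
        + (∑ j ∈ s, α j) * (w ⬝ᵥ (M *ᵥ w)) := by
    simp only [mulVec_sub, dotProduct_sub, sub_dotProduct, fun a => hsymm a w, mul_sub,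
      Finset.sum_sub_distrib, hcross, ← Finset.sum_mul]
    ring
  have h1 : 0 ≤ ∑ j ∈ s, α j * ((v j - w) ⬝ᵥ (M *ᵥ (v j - w))) :=
    Finset.sum_nonneg fun j hj => mul_nonneg (hα j hj) (hM.dotProduct_mulVec_self_nonneg _)
  nlinarith [hM.dotProduct_mulVec_self_nonneg w]

theorem dotProduct_mulVec_sum_le_card_mul {ι : Type*} {M : Matrix σ σ ℝ} (hM : M.PosSemidef)
    (s : Finset ι) (v : ι → σ → ℝ) :
    (∑ j ∈ s, v j) ⬝ᵥ (M *ᵥ ∑ j ∈ s, v j) ≤ #s * ∑ j ∈ s, v j ⬝ᵥ (M *ᵥ v j) := by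
  rcases s.eq_empty_or_nonempty with rfl | hs
  · simp
  have hcard : (0 : ℝ) < #s := by exact_mod_cast hs.card_pos
  have h := hM.dotProduct_mulVec_sum_smul_le_s15 (s := s) (α := fun _ => (#s : ℝ)⁻¹)
    (fun _ _ => by positivity) (by simp [hcard.ne']) (fun j => (#s : ℝ) • v j)
  simp only [smul_smul, inv_mul_cancel₀ hcard.ne', one_smul, mulVec_smul, dotProduct_smul,
    smul_dotProduct, smul_eq_mul, ← mul_assoc] at h
  simpa [Finset.mul_sum] using h

end PosSemidef

section Riccati

variable {κ : Type*} [Fintype κ]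

theorem closedLoop_cost_eq {α : Type*} [CommRing α] [DecidableEq σ] (P : Matrix σ σ α)
    (R : Matrix κ κ α) (B : Matrix σ κ α) (K : Matrix κ σ α)
    (hK : (R + Bᵀ * P * B) * K = -(Bᵀ * P)) :
    (1 + B * K)ᵀ * P * (1 + B * K) + Kᵀ * R * K = P + P * B * K := by
  calc (1 + B * K)ᵀ * P * (1 + B * K) + Kᵀ * R * K
      = P + P * B * K + Kᵀ * Bᵀ * P + Kᵀ * ((R + Bᵀ * P * B) * K) := by
        simp only [transpose_add, transpose_one, transpose_mul, Matrix.add_mul, Matrix.mul_add,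
          Matrix.one_mul, Matrix.mul_one, Matrix.mul_assoc]
        abel
    _ = P + P * B * K := by
        rw [hK, Matrix.mul_neg, Matrix.mul_assoc Kᵀ, add_neg_cancel_right]

variable [DecidableEq σ] [DecidableEq κ]

theorem riccati_step_cost_eq {P : Matrix σ σ ℝ} {R : Matrix κ κ ℝ} (hP : P.PosDef)
    (hR : R.PosDef) (B : Matrix σ κ ℝ) {z : σ → ℝ} {u : κ → ℝ}
    (hu : u = -((R + Bᵀ * P * B)⁻¹ * (Bᵀ * P)) *ᵥ z) :
    (z + B *ᵥ u) ⬝ᵥ (P *ᵥ (z + B *ᵥ u)) + u ⬝ᵥ (R *ᵥ u)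
      = z ⬝ᵥ ((P⁻¹ + B * R⁻¹ * Bᵀ)⁻¹ *ᵥ z) := by
  set K := -((R + Bᵀ * P * B)⁻¹ * (Bᵀ * P))
  have hPdet : IsUnit P.det := (isUnit_iff_isUnit_det P).1 hP.isUnit
  have hRdet : IsUnit R.det := (isUnit_iff_isUnit_det R).1 hR.isUnit
  have hS : IsUnit (R + Bᵀ * P * B) := by
    simpa using (hR.add_posSemidef (hP.posSemidef.conjTranspose_mul_mul_same B)).isUnit
  have hK : (R + Bᵀ * P * B) * K = -(Bᵀ * P) := by
    rw [Matrix.mul_neg, ← Matrix.mul_assoc, mul_nonsing_inv _ ((isUnit_iff_isUnit_det _).1 hS),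
      Matrix.one_mul]
  have hWoodbury : (P⁻¹ + B * R⁻¹ * Bᵀ)⁻¹ = P + P * B * K := by
    rw [add_mul_mul_inv_eq_sub _ _ _ _ hP.inv.isUnit hR.inv.isUnit (by
        rwa [nonsing_inv_nonsing_inv _ hRdet, nonsing_inv_nonsing_inv _ hPdet]),
      nonsing_inv_nonsing_inv _ hRdet, nonsing_inv_nonsing_inv _ hPdet]
    simp only [K, Matrix.mul_neg, sub_eq_add_neg, Matrix.mul_assoc]
  rw [hu, hWoodbury, ← closedLoop_cost_eq P R B K hK, add_mulVec, dotProduct_add,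
    ← mulVec_dotProduct_mulVec_mulVec_s15, ← mulVec_dotProduct_mulVec_mulVec_s15, add_mulVec, one_mulVec,
    mulVec_mulVec]

end Riccati

end Matrix

theorem summable_and_tsum_le_of_add_le {c V : ℕ → ℝ} (hc : ∀ k, 0 ≤ c k) (hV : ∀ k, 0 ≤ V k)
    (h : ∀ k, c k + V (k + 1) ≤ V k) : Summable c ∧ ∑' k, c k ≤ V 0 := by
  have hpartial : ∀ K, ∑ k ∈ range K, c k + V K ≤ V 0 := by
    intro K
    induction K with
    | zero => simp
    | succ K ih => rw [sum_range_succ]; linarith [h K]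
  have hbound : ∀ K, ∑ k ∈ range K, c k ≤ V 0 := fun K => by linarith [hpartial K, hV K]
  have hsum := summable_of_sum_range_le hc hbound
  exact ⟨hsum, hsum.tsum_le_of_sum_range_le hbound⟩

section Consensus

variable {ι σ : Type*} [Fintype ι] [DecidableEq ι] [Fintype σ] [DecidableEq σ]

theorem sum_sum_filter_mem_eq {β : Type*} [AddCommMonoid β] (nbr : ι → Finset ι)
    (f : ι → ι → β) :
    ∑ i, ∑ j ∈ univ.filter (fun j => i ∈ nbr j), f i j = ∑ j, ∑ i ∈ nbr j, f i j :=
  Finset.sum_comm' fun _ _ => by simp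

theorem sum_filter_mem_weight_le_one {nbr : ι → Finset ι} {ω : ι → ι → ℝ}
    (hω : ∀ j, ∀ i ∈ nbr j, ω j i ≤ 1 / #(univ.filter (fun l => i ∈ nbr l))) (i : ι) :
    ∑ j ∈ univ.filter (fun j => i ∈ nbr j), ω j i ≤ 1 := by
  set S := univ.filter (fun j => i ∈ nbr j)
  calc ∑ j ∈ S, ω j i ≤ ∑ _j ∈ S, 1 / (#S : ℝ) :=
        sum_le_sum fun j hj => hω j i (mem_filter.1 hj).2
    _ = #S * (1 / #S) := by rw [sum_const, nsmul_eq_mul]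
    _ ≤ 1 := by
        rcases (#S).eq_zero_or_pos with h | h
        · simp [h]
        · rw [mul_one_div_cancel (by positivity)]

/-- The paper's `∑_{j ∈ 𝒩̄ᵢ} ω_ji P̄ᵢ⁻¹ Pⱼ A x_j`: `{j | i ∈ nbr j}` is the in-neighbourhood `𝒩̄ᵢ`
of `i` in the reversed graph. -/
noncomputable def fusedState (nbr : ι → Finset ι) (ω : ι → ι → ℝ) (Pm Pbar : ι → Matrix σ σ ℝ)
    (A : Matrix σ σ ℝ) (xv : ι → σ → ℝ) (i : ι) : σ → ℝ :=
  ∑ j ∈ univ.filter (fun j => i ∈ nbr j), ω j i • ((Pbar i)⁻¹ *ᵥ (Pm j *ᵥ (A *ᵥ xv j)))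

variable {nbr : ι → Finset ι} {ω : ι → ι → ℝ} {Pm Pbar : ι → Matrix σ σ ℝ}

theorem sum_fusedState (hPm : ∀ j, (Pm j)⁻¹ = ∑ i ∈ nbr j, ω j i • (Pbar i)⁻¹)
    (hPm_unit : ∀ j, IsUnit (Pm j)) (A : Matrix σ σ ℝ) (xv : ι → σ → ℝ) :
    ∑ i, fusedState nbr ω Pm Pbar A xv i = A *ᵥ ∑ j, xv j := by
  simp only [fusedState, sum_sum_filter_mem_eq, mulVec_sum]
  refine sum_congr rfl fun j _ => ?_
  simp only [← smul_mulVec]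
  rw [← sum_mulVec, ← hPm, mulVec_mulVec,
    nonsing_inv_mul _ ((isUnit_iff_isUnit_det _).1 (hPm_unit j)), one_mulVec]

theorem sum_fusedState_dotProduct_le (hω : ∀ j, ∀ i ∈ nbr j, 0 ≤ ω j i)
    (hω_sum : ∀ i, ∑ j ∈ univ.filter (fun j => i ∈ nbr j), ω j i ≤ 1)
    (hPbar : ∀ i, (Pbar i).PosDef) (hPm : ∀ j, (Pm j)⁻¹ = ∑ i ∈ nbr j, ω j i • (Pbar i)⁻¹)
    (hPm_unit : ∀ j, IsUnit (Pm j)) (A : Matrix σ σ ℝ) (xv : ι → σ → ℝ) :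
    ∑ i, fusedState nbr ω Pm Pbar A xv i ⬝ᵥ (Pbar i *ᵥ fusedState nbr ω Pm Pbar A xv i)
      ≤ ∑ j, (A *ᵥ xv j) ⬝ᵥ (Pm j *ᵥ (A *ᵥ xv j)) := by
  set v := fun j => Pm j *ᵥ (A *ᵥ xv j)
  set w := fun i => ∑ j ∈ univ.filter (fun j => i ∈ nbr j), ω j i • v j
  have hfused : ∀ i, fusedState nbr ω Pm Pbar A xv i = (Pbar i)⁻¹ *ᵥ w i := fun i => by
    simp only [fusedState, w, v, mulVec_sum, mulVec_smul]
  calc ∑ i, fusedState nbr ω Pm Pbar A xv i ⬝ᵥ (Pbar i *ᵥ fusedState nbr ω Pm Pbar A xv i)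
      = ∑ i, w i ⬝ᵥ ((Pbar i)⁻¹ *ᵥ w i) := sum_congr rfl fun i _ => by
        rw [hfused, dotProduct_mulVec_mulVec_of_mul_eq_one
          (mul_nonsing_inv _ ((isUnit_iff_isUnit_det _).1 (hPbar i).isUnit))]
    _ ≤ ∑ i, ∑ j ∈ univ.filter (fun j => i ∈ nbr j), ω j i * (v j ⬝ᵥ ((Pbar i)⁻¹ *ᵥ v j)) :=
        sum_le_sum fun i _ => (hPbar i).inv.posSemidef.dotProduct_mulVec_sum_smul_le_s15
          (fun j hj => hω j i (mem_filter.1 hj).2) (hω_sum i) v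
    _ = ∑ j, v j ⬝ᵥ ((Pm j)⁻¹ *ᵥ v j) := by
        simp only [sum_sum_filter_mem_eq, hPm, sum_mulVec, dotProduct_sum, smul_mulVec,
          dotProduct_smul, smul_eq_mul]
    _ = ∑ j, (A *ᵥ xv j) ⬝ᵥ (Pm j *ᵥ (A *ᵥ xv j)) := sum_congr rfl fun j _ =>
        dotProduct_mulVec_mulVec_of_mul_eq_one
          (nonsing_inv_mul _ ((isUnit_iff_isUnit_det _).1 (hPm_unit j))) _

end Consensus

section ClosedLoop

variable {ι σ : Type*} [Fintype ι] [DecidableEq ι] [Fintype σ] [DecidableEq σ]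
  {κ : ι → Type*} [∀ i, Fintype (κ i)]
  {nbr : ι → Finset ι} {ω : ι → ι → ℝ} {A Q : Matrix σ σ ℝ}
  {B : ∀ i, Matrix σ (κ i) ℝ} {R : ∀ i, Matrix (κ i) (κ i) ℝ} {Pbrv Pm Pbar : ι → Matrix σ σ ℝ}

theorem state_eq_sum_virtualState [Nonempty ι]
    (hPm : ∀ j, (Pm j)⁻¹ = ∑ i ∈ nbr j, ω j i • (Pbar i)⁻¹) (hPm_unit : ∀ i, IsUnit (Pm i))
    {x : ℕ → σ → ℝ} {xv : ℕ → ι → σ → ℝ} {u : ℕ → ∀ i, κ i → ℝ}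
    (hx : ∀ k, x (k + 1) = A *ᵥ x k + ∑ i, B i *ᵥ u k i)
    (hxv0 : ∀ i, xv 0 i = (Fintype.card ι : ℝ)⁻¹ • x 0)
    (hxv : ∀ k i, xv (k + 1) i = fusedState nbr ω Pm Pbar A (xv k) i + B i *ᵥ u k i) (k : ℕ) :
    x k = ∑ i, xv k i := by
  induction k with
  | zero =>
    simp only [hxv0, sum_const, card_univ, ← Nat.cast_smul_eq_nsmul ℝ, smul_smul]
    rw [mul_inv_cancel₀ (by positivity), one_smul]
  | succ k ih =>
    simp only [hx k, ih, hxv k, sum_add_distrib, sum_fusedState hPm hPm_unit]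

variable [∀ i, DecidableEq (κ i)]

theorem stage_cost_add_lyapunov_le (hω : ∀ j, ∀ i ∈ nbr j, 0 ≤ ω j i)
    (hω_sum : ∀ i, ∑ j ∈ univ.filter (fun j => i ∈ nbr j), ω j i ≤ 1)
    (hQ : Q.PosSemidef) (hR : ∀ i, (R i).PosDef) (hPbrv : ∀ i, (Pbrv i).PosDef)
    (hPm_unit : ∀ i, IsUnit (Pm i)) (hPbar : ∀ i, (Pbar i).PosDef)
    (hPbrv_eq : ∀ i, Pbrv i = Aᵀ * Pm i * A + (Fintype.card ι : ℝ) • Q)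
    (hPm : ∀ j, (Pm j)⁻¹ = ∑ i ∈ nbr j, ω j i • (Pbar i)⁻¹)
    (hPbar_eq : ∀ i, Pbar i = ((Pbrv i)⁻¹ + B i * (R i)⁻¹ * (B i)ᵀ)⁻¹)
    {xv xv' : ι → σ → ℝ} {u : ∀ i, κ i → ℝ}
    (hxv' : ∀ i, xv' i = fusedState nbr ω Pm Pbar A xv i + B i *ᵥ u i)
    (hu : ∀ i, u i = -((R i + (B i)ᵀ * Pbrv i * B i)⁻¹ * ((B i)ᵀ * Pbrv i)) *ᵥ
      fusedState nbr ω Pm Pbar A xv i) :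
    (∑ i, xv i) ⬝ᵥ (Q *ᵥ ∑ i, xv i) + ∑ i, u i ⬝ᵥ (R i *ᵥ u i)
        + ∑ i, xv' i ⬝ᵥ (Pbrv i *ᵥ xv' i)
      ≤ ∑ i, xv i ⬝ᵥ (Pbrv i *ᵥ xv i) := by
  have hriccati : ∑ i, xv' i ⬝ᵥ (Pbrv i *ᵥ xv' i) + ∑ i, u i ⬝ᵥ (R i *ᵥ u i)
      = ∑ i, fusedState nbr ω Pm Pbar A xv i ⬝ᵥ (Pbar i *ᵥ fusedState nbr ω Pm Pbar A xv i) := by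
    rw [← sum_add_distrib]
    refine sum_congr rfl fun i _ => ?_
    rw [hxv' i, hPbar_eq i]
    exact riccati_step_cost_eq (hPbrv i) (hR i) (B i) (hu i)
  have hdynamics : ∀ j, (A *ᵥ xv j) ⬝ᵥ (Pm j *ᵥ (A *ᵥ xv j))
      = xv j ⬝ᵥ (Pbrv j *ᵥ xv j) - Fintype.card ι * (xv j ⬝ᵥ (Q *ᵥ xv j)) := fun j => by
    rw [mulVec_dotProduct_mulVec_mulVec_s15, hPbrv_eq j, add_mulVec, dotProduct_add, smul_mulVec,
      dotProduct_smul, smul_eq_mul, add_sub_cancel_right]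
  have hconsensus := sum_fusedState_dotProduct_le hω hω_sum hPbar hPm hPm_unit A xv
  have hstate := hQ.dotProduct_mulVec_sum_le_card_mul univ xv
  rw [card_univ] at hstate
  simp only [hdynamics, sum_sub_distrib, ← mul_sum] at hconsensus
  linarith

end ClosedLoop

theorem infinite_horizon_cost_bound_general {n N : ℕ} (hN : 0 < N) (m : Fin N → ℕ)
    (nbr : Fin N → Finset (Fin N))
    (ω : Fin N → Fin N → ℝ)
    (hω : ∀ i, ∀ j ∈ nbr i, 0 < ω i j ∧
      ω i j ≤ 1 / ((Finset.univ.filter (fun l => j ∈ nbr l)).card : ℝ))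
    (A : Matrix (Fin n) (Fin n) ℝ)
    (B : ∀ i : Fin N, Matrix (Fin n) (Fin (m i)) ℝ)
    (Q : Matrix (Fin n) (Fin n) ℝ) (hQ : Q.PosDef)
    (R : ∀ i : Fin N, Matrix (Fin (m i)) (Fin (m i)) ℝ) (hR : ∀ i, (R i).PosDef)
    (Pbrv Pm Pbar : Fin N → Matrix (Fin n) (Fin n) ℝ)
    (hPD : ∀ i, (Pbrv i).PosDef ∧ (Pm i).PosDef ∧ (Pbar i).PosDef)
    (hfp1 : ∀ i, Pbrv i = Aᵀ * Pm i * A + (N : ℝ) • Q)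
    (hfp2 : ∀ i, Pm i =
      (∑ j ∈ nbr i, ω i j • ((Pbrv j)⁻¹ + B j * (R j)⁻¹ * (B j)ᵀ))⁻¹)
    (hfp3 : ∀ i, Pbar i = ((Pbrv i)⁻¹ + B i * (R i)⁻¹ * (B i)ᵀ)⁻¹)
    (x : ℕ → Fin n → ℝ) (xv : ℕ → Fin N → Fin n → ℝ)
    (u : ∀ _ : ℕ, ∀ i : Fin N, Fin (m i) → ℝ)
    (hx : ∀ k, x (k+1) = A *ᵥ x k + ∑ i, B i *ᵥ u k i)
    (hxv0 : ∀ i, xv 0 i = (N : ℝ)⁻¹ • x 0)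
    (hxv : ∀ k i, xv (k+1) i =
      (∑ j ∈ Finset.univ.filter (fun j => i ∈ nbr j),
        ω j i • ((Pbar i)⁻¹ *ᵥ (Pm j *ᵥ (A *ᵥ xv k j))))
      + B i *ᵥ u k i)
    (hu : ∀ k i, u k i =
      (-((R i + (B i)ᵀ * Pbrv i * B i)⁻¹ * ((B i)ᵀ * Pbrv i))) *ᵥ
      (∑ j ∈ Finset.univ.filter (fun j => i ∈ nbr j),
        ω j i • ((Pbar i)⁻¹ *ᵥ (Pm j *ᵥ (A *ᵥ xv k j)))))
    :
    Summable (fun k => x k ⬝ᵥ (Q *ᵥ x k) + ∑ i, u k i ⬝ᵥ (R i *ᵥ u k i)) ∧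
    ∑' k, (x k ⬝ᵥ (Q *ᵥ x k) + ∑ i, u k i ⬝ᵥ (R i *ᵥ u k i))
      ≤ (1 / (N : ℝ) ^ 2) * ∑ i, x 0 ⬝ᵥ (Pbrv i *ᵥ x 0) := by
  have : Nonempty (Fin N) := ⟨⟨0, hN⟩⟩
  have hPm_unit : ∀ i, IsUnit (Pm i) := fun i => (hPD i).2.1.isUnit
  have hPm : ∀ j, (Pm j)⁻¹ = ∑ i ∈ nbr j, ω j i • (Pbar i)⁻¹ := fun j => by
    simp only [fun i => inv_eq_of_eq_nonsing_inv (hPD i).2.2.isUnit (hfp3 i)]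
    exact inv_eq_of_eq_nonsing_inv (hPm_unit j) (hfp2 j)
  have hx_sum := state_eq_sum_virtualState hPm hPm_unit hx (by simpa using hxv0) hxv
  obtain ⟨hsummable, hle⟩ := summable_and_tsum_le_of_add_le
    (c := fun k => x k ⬝ᵥ (Q *ᵥ x k) + ∑ i, u k i ⬝ᵥ (R i *ᵥ u k i))
    (V := fun k => ∑ i, xv k i ⬝ᵥ (Pbrv i *ᵥ xv k i))
    (fun k => add_nonneg (hQ.posSemidef.dotProduct_mulVec_self_nonneg _)
      (sum_nonneg fun i _ => (hR i).posSemidef.dotProduct_mulVec_self_nonneg _))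
    (fun k => sum_nonneg fun i _ => (hPD i).1.posSemidef.dotProduct_mulVec_self_nonneg _)
    (fun k => by
      rw [hx_sum k]
      exact stage_cost_add_lyapunov_le (fun j i hi => (hω j i hi).1.le)
        (sum_filter_mem_weight_le_one fun j i hi => (hω j i hi).2) hQ.posSemidef hR
        (fun i => (hPD i).1) hPm_unit (fun i => (hPD i).2.2) (by simpa using hfp1) hPm hfp3
        (hxv k) (hu k))
  refine ⟨hsummable, hle.trans_eq ?_⟩
  simp only [hxv0, mulVec_smul, dotProduct_smul, smul_dotProduct, smul_eq_mul, mul_sum]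
  congr 1 with i
  ring

/-- Theorem 4 of the paper: in the time-invariant setting, when the multi-input
system is driven by the stationary distributed controller built from the
steady-state matrices `P̆_i, P_i, P̄_i`, the infinite-horizon cost
`J_∞ = Σ_{k=0}^∞ (x_kᵀ Q x_k + Σ_i u_{k,i}ᵀ R_i u_{k,i})` is finite and satisfies
`J_∞ ≤ (1/N²) Σ_i x_0ᵀ P̆_i x_0`. -/
theorem infinite_horizon_cost_bound {n N : ℕ} (hN : 0 < N) (m : Fin N → ℕ)
    (nbr : Fin N → Finset (Fin N)) (hself : ∀ i, i ∈ nbr i)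
    (hconn : ∀ i j : Fin N, ∃ l : ℕ, 0 < l ∧
      0 < (((Matrix.of fun a b => if b ∈ nbr a then (1 : ℝ) else 0) :
        Matrix (Fin N) (Fin N) ℝ) ^ l) i j)
    (ω : Fin N → Fin N → ℝ)
    (hω : ∀ i, ∀ j ∈ nbr i, 0 < ω i j ∧
      ω i j ≤ 1 / ((Finset.univ.filter (fun l => j ∈ nbr l)).card : ℝ))
    (A : Matrix (Fin n) (Fin n) ℝ) (hA : IsUnit A.det)
    (B : ∀ i : Fin N, Matrix (Fin n) (Fin (m i)) ℝ)
    (Q : Matrix (Fin n) (Fin n) ℝ) (hQ : Q.PosDef)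
    (R : ∀ i : Fin N, Matrix (Fin (m i)) (Fin (m i)) ℝ) (hR : ∀ i, (R i).PosDef)
    (η : ℝ) (hη : 0 < η) (L : ℕ) (hL : 0 < L)
    (hJC : ((∑ h ∈ Finset.range L,
        A ^ h * (∑ i, B i * (R i)⁻¹ * (B i)ᵀ) * (A ^ h)ᵀ)
      - η • (1 : Matrix (Fin n) (Fin n) ℝ)).PosSemidef)
    (Pbrv Pm Pbar : Fin N → Matrix (Fin n) (Fin n) ℝ)
    (hPD : ∀ i, (Pbrv i).PosDef ∧ (Pm i).PosDef ∧ (Pbar i).PosDef)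
    (hfp1 : ∀ i, Pbrv i = Aᵀ * Pm i * A + (N : ℝ) • Q)
    (hfp2 : ∀ i, Pm i =
      (∑ j ∈ nbr i, ω i j • ((Pbrv j)⁻¹ + B j * (R j)⁻¹ * (B j)ᵀ))⁻¹)
    (hfp3 : ∀ i, Pbar i = ((Pbrv i)⁻¹ + B i * (R i)⁻¹ * (B i)ᵀ)⁻¹)
    (x : ℕ → Fin n → ℝ) (xv : ℕ → Fin N → Fin n → ℝ)
    (u : ∀ _ : ℕ, ∀ i : Fin N, Fin (m i) → ℝ)
    (hx : ∀ k, x (k+1) = A *ᵥ x k + ∑ i, B i *ᵥ u k i)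
    (hxv0 : ∀ i, xv 0 i = (N : ℝ)⁻¹ • x 0)
    (hxv : ∀ k i, xv (k+1) i =
      (∑ j ∈ Finset.univ.filter (fun j => i ∈ nbr j),
        ω j i • ((Pbar i)⁻¹ *ᵥ (Pm j *ᵥ (A *ᵥ xv k j))))
      + B i *ᵥ u k i)
    (hu : ∀ k i, u k i =
      (-((R i + (B i)ᵀ * Pbrv i * B i)⁻¹ * ((B i)ᵀ * Pbrv i))) *ᵥ
      (∑ j ∈ Finset.univ.filter (fun j => i ∈ nbr j),
        ω j i • ((Pbar i)⁻¹ *ᵥ (Pm j *ᵥ (A *ᵥ xv k j)))))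
    :
    Summable (fun k => x k ⬝ᵥ (Q *ᵥ x k) + ∑ i, u k i ⬝ᵥ (R i *ᵥ u k i)) ∧
    ∑' k, (x k ⬝ᵥ (Q *ᵥ x k) + ∑ i, u k i ⬝ᵥ (R i *ᵥ u k i))
      ≤ (1 / (N : ℝ) ^ 2) * ∑ i, x 0 ⬝ᵥ (Pbrv i *ᵥ x 0) :=
  infinite_horizon_cost_bound_general hN m nbr ω hω A B Q hQ R hR Pbrv Pm Pbar hPD hfp1 hfp2 hfp3 x
    xv u hx hxv0 hxv hu
end
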